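/- arXiv:math/0612345 — 6 statements merged into one kernel-verified Lean document; each statement's English description precedes it below -/
import Mathlib

section
/- Let $X \subset \Sigma^{\mathbb{Z}}$ be a subshift over a finite alphabet $\Sigma$ with property $(D)$ (i.e., for every admissible word $b\sigma$ of $X$ there exists a word $a$ admissible to the left of $b$ such that every left-infinite extension of $ab$ can be followed by $\sigma$). Then the set $E(X) = \bigcap_{i\in\mathbb{Z}} \{x \in X : x_i \in \omega_1^+(x_{(-\infty,i)})\}$ is residual in $X$ (a dense $G_\delta$). -/
open Set

/-!
The condition `x i ∈ ω₁⁺(x_{(-∞,i)})` only depends on a finite window of `x` around `i`,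
so it defines an open set and `E(X)` is a Gδ. For density, iterating property (D) at the
positions `i - 1, …, q - 1` produces, for any word `x_{(a,q]}` with `a < i ≤ q`, a left
extension of `x_{(a,i-1]}` after which every compatible past can be followed by all of
`x_{(i-1,q]}`; continuing that extension itself by `x_{(i-1,q]}` gives a point `x'` agreeing
with `x` on `(a,q]` and satisfying `x'_i ∈ ω₁⁺(x'_{(-∞,i)})`.
Since `X` is compact, the Baire category theorem finishes the proof.
-/

/-- The shift map on bi-infinite sequences. -/
def shiftMap {A : Type*} (x : ℤ → A) : ℤ → A := fun i => x (i + 1)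

/-- A subshift: a closed, shift-invariant subset of the full shift. -/
def IsSubshift {A : Type*} [TopologicalSpace A] (X : Set (ℤ → A)) : Prop :=
  IsClosed X ∧ ∀ x, x ∈ X ↔ shiftMap x ∈ X

/-- Property (D): for every admissible word `bσ` (realized as `x_{(-m,0]}` together with
`x 1` for some `x ∈ X`) there is a left extension `a` (realized by a point `y ∈ X`
agreeing with `x` on `(-m,0]`, the word `ab` being `y_{(-k,0]}`) such that every
left-infinite past compatible with `ab` can be followed by `σ = x 1`. -/
def PropertyD {A : Type*} (X : Set (ℤ → A)) : Prop :=
  ∀ x ∈ X, ∀ m : ℕ, ∃ (k : ℕ) (y : ℤ → A), y ∈ X ∧ m ≤ k ∧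
    (∀ j : ℤ, -(m : ℤ) < j → j ≤ 0 → y j = x j) ∧
    (∀ z ∈ X, (∀ j : ℤ, -(k : ℤ) < j → j ≤ 0 → z j = y j) →
      ∃ z' ∈ X, (∀ i : ℤ, i ≤ 0 → z' i = z i) ∧ z' 1 = x 1)

/-- The set `E(X) = ⋂_{i ∈ ℤ} {x ∈ X : x i ∈ ω₁⁺(x_{(-∞,i)})}`, where
`x i ∈ ω₁⁺(x_{(-∞,i)})` means: there is `k` such that every point of `X` carrying the
word `x_{[i-k,i)}` (regardless of its more remote past) can be continued by the symbol
`x i` at position `i`. -/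
def ESet {A : Type*} (X : Set (ℤ → A)) : Set (ℤ → A) :=
  X ∩ ⋂ i : ℤ, {x | ∃ k : ℕ, ∀ y ∈ X,
    (∀ j : ℤ, i - (k : ℤ) ≤ j → j < i → y j = x j) →
    ∃ y' ∈ X, (∀ j : ℤ, j < i → y' j = y j) ∧ y' i = x i}

section

variable {A : Type*}

/-- `ForcesContinuation X y a p x q` says `x_{(p,q]} ∈ ω⁺_{q-p}(y_{(a,p]})`. -/
def ForcesContinuation (X : Set (ℤ → A)) (y : ℤ → A) (a p : ℤ) (x : ℤ → A) (q : ℤ) :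
    Prop :=
  ∀ z ∈ X, EqOn z y (Ioc a p) → ∃ z' ∈ X, EqOn z' z (Iic p) ∧ EqOn z' x (Ioc p q)

/-- `x ∈ followerSet X i` says `x i ∈ ω₁⁺(x_{(-∞,i)})`; thus
`ESet X = X ∩ ⋂ i, followerSet X i`. -/
def followerSet (X : Set (ℤ → A)) (i : ℤ) : Set (ℤ → A) :=
  {x | ∃ k : ℕ, ∀ y ∈ X,
    (∀ j : ℤ, i - (k : ℤ) ≤ j → j < i → y j = x j) →
    ∃ y' ∈ X, (∀ j : ℤ, j < i → y' j = y j) ∧ y' i = x i}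

namespace ForcesContinuation

variable {X : Set (ℤ → A)} {x x' y y' : ℤ → A} {a p q : ℤ}

lemma mono {q' : ℤ} (h : ForcesContinuation X y a p x q) (hy : EqOn y' y (Ioc a p))
    (hx : EqOn x' x (Ioc p q')) (hq : q' ≤ q) : ForcesContinuation X y' a p x' q' := by
  intro z hz hzy
  obtain ⟨z', hz', hz'z, hz'x⟩ := h z hz fun j hj => (hzy hj).trans (hy hj)
  exact ⟨z', hz', hz'z, fun j hj => (hz'x (Ioc_subset_Ioc_right hq hj)).trans (hx hj).symm⟩

lemma trans {y₁ y₂ : ℤ → A} {b₁ b₂ r : ℤ} (h₂ : ForcesContinuation X y₂ b₂ p y₁ q)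
    (h₁ : ForcesContinuation X y₁ b₁ q x r) (hy : EqOn y₂ y₁ (Ioc b₁ p))
    (hyx : EqOn y₁ x (Ioc p q)) (hb : b₂ ≤ b₁) (hpq : p ≤ q) :
    ForcesContinuation X y₂ b₂ p x r := by
  intro z hz hzy
  obtain ⟨z', hz', hz'z, hz'y⟩ := h₂ z hz hzy
  have hwin : EqOn z' y₁ (Ioc b₁ q) := by
    intro j hj
    rcases le_or_gt j p with hjp | hjp
    · rw [hz'z hjp, hzy ⟨hb.trans_lt hj.1, hjp⟩]
      exact hy ⟨hj.1, hjp⟩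
    · exact hz'y ⟨hjp, hj.2⟩
  obtain ⟨z'', hz'', hz''z', hz''x⟩ := h₁ z' hz' hwin
  refine ⟨z'', hz'', fun j hj => (hz''z' (le_trans hj hpq)).trans (hz'z hj), fun j hj => ?_⟩
  rcases le_or_gt j q with hjq | hjq
  · rw [hz''z' hjq, hz'y ⟨hj.1, hjq⟩]
    exact hyx ⟨hj.1, hjq⟩
  · exact hz''x ⟨hjq, hj.2⟩

end ForcesContinuation

lemma mem_followerSet_of_forcesContinuation {X : Set (ℤ → A)} {x : ℤ → A} {a i : ℤ}
    (h : ForcesContinuation X x a (i - 1) x i) : x ∈ followerSet X i := by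
  refine ⟨(i - 1 - a).toNat, fun y hy hyx => ?_⟩
  obtain ⟨y', hy', hy'y, hy'x⟩ := h y hy fun j ⟨h₁, h₂⟩ => hyx j (by omega) (by omega)
  exact ⟨y', hy', fun j hj => hy'y (show j ≤ i - 1 by omega), hy'x ⟨by omega, le_rfl⟩⟩

variable [TopologicalSpace A] {X : Set (ℤ → A)}

lemma IsSubshift.comp_add_mem (hX : IsSubshift X) (t : ℤ) {x : ℤ → A} (hx : x ∈ X) :
    x ∘ (· + t) ∈ X := by
  induction t using Int.induction_on with
  | zero => simpa [Function.comp_def] using hx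
  | succ n ih =>
    have h : shiftMap (x ∘ (· + n)) = x ∘ (· + (n + 1)) :=
      funext fun i => congrArg x (by ring)
    exact h ▸ (hX.2 _).mp ih
  | pred n ih =>
    have h : shiftMap (x ∘ (· + (-n - 1))) = x ∘ (· + -n) :=
      funext fun i => congrArg x (by ring)
    exact (hX.2 _).mpr (h ▸ ih)

lemma ForcesContinuation.comp_add (hX : IsSubshift X) {x y : ℤ → A} {a p q t : ℤ}
    (h : ForcesContinuation X y (a + t) (p + t) x (q + t)) :
    ForcesContinuation X (y ∘ (· + t)) a p (x ∘ (· + t)) q := by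
  intro z hz hzy
  obtain ⟨z', hz', hz'z, hz'x⟩ :=
    h (z ∘ (· + -t)) (hX.comp_add_mem _ hz) fun j ⟨h₁, h₂⟩ => by
    simpa using hzy (show j + -t ∈ Ioc a p from ⟨by omega, by omega⟩)
  refine ⟨z' ∘ (· + t), hX.comp_add_mem t hz', fun j hj => ?_, fun j hj => ?_⟩
  · simpa using hz'z (show j + t ≤ p + t by simp only [mem_Iic] at hj; omega)
  · exact hz'x ⟨by linarith [hj.1], by linarith [hj.2]⟩

lemma PropertyD.exists_forcesContinuation_add_one (hD : PropertyD X) (hX : IsSubshift X)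
    {x : ℤ → A} (hx : x ∈ X) (p : ℤ) {a : ℤ} (ha : a ≤ p) :
    ∃ b ≤ a, ∃ y ∈ X, EqOn y x (Ioc a p) ∧ ForcesContinuation X y b p x (p + 1) := by
  obtain ⟨k, y, hy, hk, hyx, hforce⟩ := hD (x ∘ (· + p)) (hX.comp_add_mem p hx) (p - a).toNat
  have h₀ : ForcesContinuation X y (p - k + -p) (p + -p) (x ∘ (· + p)) (p + 1 + -p) := by
    intro z hz hzy
    obtain ⟨z', hz', hz'z, hz'1⟩ := hforce z hz fun j h₁ h₂ => hzy ⟨by omega, by omega⟩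
    refine ⟨z', hz', fun j hj => hz'z j (by simpa using hj), fun j hj => ?_⟩
    obtain rfl : j = 1 := by simp only [mem_Ioc] at hj; omega
    exact hz'1
  refine ⟨p - k, by omega, y ∘ (· + -p), hX.comp_add_mem _ hy, fun j ⟨h₁, h₂⟩ => ?_,
    (h₀.comp_add hX).mono (eqOn_refl _ _) (fun j _ => by simp) le_rfl⟩
  simpa using hyx (j + -p) (by omega) (by omega)

lemma PropertyD.exists_forcesContinuation (hD : PropertyD X) (hX : IsSubshift X)
    {x : ℤ → A} (hx : x ∈ X) (p : ℤ) (n : ℕ) {a : ℤ} (ha : a ≤ p) :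
    ∃ b ≤ a, ∃ y ∈ X, EqOn y x (Ioc a p) ∧ ForcesContinuation X y b p x (p + n) := by
  induction n generalizing x a with
  | zero =>
    refine ⟨a, le_rfl, x, hx, eqOn_refl _ _, fun z hz _ => ⟨z, hz, eqOn_refl _ _, ?_⟩⟩
    simp
  | succ n ih =>
    obtain ⟨b₁, hb₁, y₁, hy₁, hy₁x, h₁⟩ :=
      hD.exists_forcesContinuation_add_one hX hx (p + n) (a := a) (by omega)
    obtain ⟨b₂, hb₂, y₂, hy₂, hy₂y₁, h₂⟩ := ih hy₁ (hb₁.trans ha)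
    refine ⟨b₂, hb₂.trans hb₁, y₂, hy₂, fun j hj => ?_, ?_⟩
    · rw [hy₂y₁ (Ioc_subset_Ioc_left hb₁ hj)]
      exact hy₁x (Ioc_subset_Ioc_right (by omega) hj)
    · rw [Nat.cast_succ, ← add_assoc]
      exact h₂.trans h₁ hy₂y₁ (hy₁x.mono (Ioc_subset_Ioc_left ha)) hb₂ (by omega)

lemma PropertyD.exists_mem_followerSet (hD : PropertyD X) (hX : IsSubshift X) {x : ℤ → A}
    (hx : x ∈ X) (i : ℤ) {a q : ℤ} (ha : a < i) (hq : i ≤ q) :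
    ∃ x' ∈ X, x' ∈ followerSet X i ∧ EqOn x' x (Ioc a q) := by
  obtain ⟨b, -, y, hy, hyx, h⟩ :=
    hD.exists_forcesContinuation hX hx (i - 1) (q - (i - 1)).toNat (a := a) (by omega)
  rw [show i - 1 + ((q - (i - 1)).toNat : ℤ) = q by omega] at h
  obtain ⟨x', hx', hx'y, hx'x⟩ := h y hy (eqOn_refl _ _)
  refine ⟨x', hx', mem_followerSet_of_forcesContinuation (a := b) ?_, fun j hj => ?_⟩
  · exact h.mono (hx'y.mono Ioc_subset_Iic_self) (hx'x.mono (Ioc_subset_Ioc_right hq)) hq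
  · rcases le_or_gt j (i - 1) with hji | hji
    · exact (hx'y hji).trans (hyx ⟨hj.1, hji⟩)
    · exact hx'x ⟨hji, hj.2⟩

lemma exists_eqOn_Icc_subset {U : Set (ℤ → A)} (hU : IsOpen U) {x : ℤ → A} (hx : x ∈ U) :
    ∃ N : ℕ, ∀ w : ℤ → A, EqOn w x (Icc (-N : ℤ) N) → w ∈ U := by
  obtain ⟨I, u, hIu, hsub⟩ := isOpen_pi_iff.mp hU x hx
  refine ⟨I.sup Int.natAbs, fun w hw => hsub fun j hj => ?_⟩
  have hjN := Finset.le_sup (f := Int.natAbs) hj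
  rw [Finset.mem_coe] at hj
  rw [hw ⟨by omega, by omega⟩]
  exact (hIu j hj).2

lemma isOpen_followerSet [DiscreteTopology A] (X : Set (ℤ → A)) (i : ℤ) :
    IsOpen (followerSet X i) := by
  refine isOpen_iff_forall_mem_open.mpr fun x ⟨k, hk⟩ => ⟨(Icc (i - k) i).pi fun j => {x j},
    fun w hw => ?_, isOpen_set_pi (finite_Icc _ _) fun j _ => isOpen_discrete _, fun j _ => rfl⟩
  have hwx : ∀ j ∈ Icc (i - k) i, w j = x j := hw
  refine ⟨k, fun y hy hyw => ?_⟩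
  obtain ⟨y', hy', hy'y, hy'x⟩ :=
    hk y hy fun j h₁ h₂ => (hyw j h₁ h₂).trans (hwx j ⟨h₁, h₂.le⟩)
  exact ⟨y', hy', hy'y, hy'x.trans (hwx i ⟨by omega, le_rfl⟩).symm⟩

lemma PropertyD.dense_followerSet (hD : PropertyD X) (hX : IsSubshift X) (i : ℤ) :
    Dense (Subtype.val ⁻¹' followerSet X i : Set X) := by
  rw [dense_iff_inter_open]
  rintro _ ⟨U, hU, rfl⟩ ⟨⟨x, hx⟩, hxU⟩
  obtain ⟨N, hN⟩ := exists_eqOn_Icc_subset hU hxU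
  obtain ⟨x', hx', hx'i, hx'x⟩ :=
    hD.exists_mem_followerSet hX hx i (a := min (-N - 1) (i - 1)) (q := max N i)
      (by omega) (by omega)
  exact ⟨⟨x', hx'⟩, hN x' (hx'x.mono (Icc_subset_Ioc (by omega) (by omega))), hx'i⟩

end

/-- A property (D) subshift has `E(X)` residual (a dense Gδ) in `X`. -/
theorem ESet_residual {A : Type*} [Fintype A] [TopologicalSpace A] [DiscreteTopology A]
    (X : Set (ℤ → A)) (hX : IsSubshift X) (hD : PropertyD X) :
    Dense (Subtype.val ⁻¹' ESet X : Set X) ∧ IsGδ (Subtype.val ⁻¹' ESet X : Set X) := by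
  have : CompactSpace X := isCompact_iff_compactSpace.mp hX.1.isCompact
  have hE : (Subtype.val ⁻¹' ESet X : Set X) = ⋂ i, Subtype.val ⁻¹' followerSet X i := by
    ext z
    simp only [mem_preimage, ESet, mem_inter_iff, mem_iInter]
    exact and_iff_right z.2
  have hopen (i : ℤ) : IsOpen (Subtype.val ⁻¹' followerSet X i : Set X) :=
    (isOpen_followerSet X i).preimage continuous_subtype_val
  rw [hE]
  exact ⟨dense_iInter_of_isOpen hopen (hD.dense_followerSet hX),
    .iInter fun i => (hopen i).isGδ⟩
end

section
/- A subshift $X \subset \Sigma^{\mathbb{Z}}$ has property $(D)$ if and only if the set $E(X) = \bigcap_{i\in\mathbb{Z}} \{x \in X : x_i \in \omega_1^+(x_{(-\infty,i)})\}$ is dense in $X$. -/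
open Set

/-! The sets `ESetAt X i` are open and `E(X)` is their intersection inside `X`; a subshift over a
finite alphabet is compact, so by Baire it suffices that each of them is dense. Given a point and a
window, (D) forces one more symbol immediately left of an already forced block `[l, r]`, at the cost
of changing the remote past and the block itself; the block is then restored symbol by symbol,
because each of its symbols is forced by a finite word that was left untouched. Conversely, a point
of `E(X)` agreeing with `x` on a long window supplies the left extension required by (D). -/

section

variable {A : Type*} {X : Set (ℤ → A)}

theorem IsSubshift.shift_mem [TopologicalSpace A] (hX : IsSubshift X) {x : ℤ → A} (hx : x ∈ X)
    (t : ℤ) : (fun j => x (j + t)) ∈ X := by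
  induction t using Int.induction_on with
  | zero => simpa using hx
  | succ i ih =>
    convert (hX.2 _).1 ih using 1
    funext j
    simp only [shiftMap]
    ring_nf
  | pred i ih =>
    refine (hX.2 _).2 ?_
    convert ih using 1
    funext j
    simp only [shiftMap]
    ring_nf

/-- `InOmegaPlus X x c i` says `x i ∈ ω₁⁺(x_{[c,i)})`. -/
def InOmegaPlus (X : Set (ℤ → A)) (x : ℤ → A) (c i : ℤ) : Prop :=
  ∀ y ∈ X, (∀ j : ℤ, c ≤ j → j < i → y j = x j) →
    ∃ y' ∈ X, (∀ j : ℤ, j < i → y' j = y j) ∧ y' i = x i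

theorem InOmegaPlus.mono {x y : ℤ → A} {c c' i : ℤ} (h : InOmegaPlus X x c i) (hc : c' ≤ c)
    (hyx : ∀ j : ℤ, c ≤ j → j < i → y j = x j) (hyxi : y i = x i) : InOmegaPlus X y c' i := by
  intro v hv hvy
  obtain ⟨v', hv', hv'v, hv'i⟩ := h v hv fun j hcj hji => by
    rw [hvy j (hc.trans hcj) hji, hyx j hcj hji]
  exact ⟨v', hv', hv'v, hv'i.trans hyxi.symm⟩

theorem InOmegaPlus.shift [TopologicalSpace A] (hX : IsSubshift X) {x : ℤ → A} {c i : ℤ}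
    (h : InOmegaPlus X x c i) (t : ℤ) : InOmegaPlus X (fun j => x (j + t)) (c - t) (i - t) := by
  intro v hv hvx
  obtain ⟨v', hv', hv'v, hv'i⟩ := h _ (hX.shift_mem hv (-t)) fun j hcj hji => by
    simpa [sub_eq_add_neg] using hvx (j - t) (by omega) (by omega)
  refine ⟨_, hX.shift_mem hv' t, fun j hj => ?_, ?_⟩
  · simpa using hv'v (j + t) (by omega)
  · simpa using hv'i

def ESetAt (X : Set (ℤ → A)) (i : ℤ) : Set (ℤ → A) :=
  {x | ∃ k : ℕ, InOmegaPlus X x (i - k) i}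

theorem ESet_eq_inter_iInter_ESetAt : ESet X = X ∩ ⋂ i, ESetAt X i := rfl

section Topology

variable [TopologicalSpace A] [DiscreteTopology A]

theorem isOpen_cylinder (x : ℤ → A) (a b : ℤ) : IsOpen ((Icc a b).pi fun j => {x j}) :=
  isOpen_set_pi (finite_Icc a b) fun _ _ => isOpen_discrete _

theorem isOpen_ESetAt (i : ℤ) : IsOpen (ESetAt X i) := by
  refine isOpen_iff_forall_mem_open.2 fun x ⟨k, hk⟩ =>
    ⟨_, fun y hy => ⟨k, ?_⟩, isOpen_cylinder x (i - k) i, fun j _ => rfl⟩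
  exact hk.mono le_rfl (fun j h1 h2 => hy j ⟨h1, h2.le⟩) (hy i ⟨by omega, le_rfl⟩)

theorem dense_preimage_val_iff {S : Set (ℤ → A)} :
    Dense (Subtype.val ⁻¹' S : Set X) ↔
      ∀ x ∈ X, ∀ a b : ℤ, ∃ z ∈ X ∩ S, ∀ j : ℤ, a ≤ j → j ≤ b → z j = x j := by
  simp only [Dense, closure_subtype, Subtype.image_preimage_coe, Subtype.forall]
  refine forall₂_congr fun x hx => ⟨fun h a b => ?_, fun h => mem_closure_iff.2 fun o ho hxo => ?_⟩
  · obtain ⟨z, hzx, hz⟩ := mem_closure_iff.1 h _ (isOpen_cylinder x a b) fun j _ => rfl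
    exact ⟨z, hz, fun j h1 h2 => hzx j ⟨h1, h2⟩⟩
  · obtain ⟨I, u, hu, hIo⟩ := isOpen_pi_iff.1 ho x hxo
    obtain ⟨z, hz, hzx⟩ := h (-(I.sup Int.natAbs : ℕ)) (I.sup Int.natAbs : ℕ)
    refine ⟨z, hIo fun j hj => ?_, hz⟩
    have hjI := Finset.le_sup (f := Int.natAbs) hj
    rw [hzx j (by omega) (by omega)]
    exact (hu j hj).2

end Topology

theorem PropertyD.exists_inOmegaPlus_one (hD : PropertyD X) {x : ℤ → A} (hx : x ∈ X) (m : ℕ) :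
    ∃ w ∈ X, ∃ k : ℕ, m ≤ k ∧ (∀ j : ℤ, -(m : ℤ) < j → j ≤ 1 → w j = x j) ∧
      InOmegaPlus X w (1 - k) 1 := by
  obtain ⟨k, y, hy, hmk, hyx, hext⟩ := hD x hx m
  obtain ⟨w, hw, hwy, hw1⟩ := hext y hy fun _ _ _ => rfl
  refine ⟨w, hw, k, hmk, fun j h1 h2 => ?_, fun v hv hvw => ?_⟩
  · rcases h2.lt_or_eq with h2 | rfl
    · rw [hwy j (by omega), hyx j h1 (by omega)]
    · exact hw1
  · obtain ⟨v', hv', hv'v, hv'1⟩ := hext v hv fun j h1 h2 => by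
      rw [hvw j (by omega) (by omega), hwy j h2]
    exact ⟨v', hv', fun j hj => hv'v j (by omega), hv'1.trans hw1.symm⟩

theorem PropertyD.exists_inOmegaPlus [TopologicalSpace A] (hX : IsSubshift X) (hD : PropertyD X)
    {x : ℤ → A} (hx : x ∈ X) (p c : ℤ) :
    ∃ w ∈ X, ∃ c' ≤ c, (∀ j : ℤ, c ≤ j → j ≤ p → w j = x j) ∧ InOmegaPlus X w c' p := by
  obtain ⟨w, hw, k, hmk, hwx, hk⟩ :=
    hD.exists_inOmegaPlus_one (hX.shift_mem hx (p - 1)) (p - c).toNat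
  refine ⟨fun j => w (j + (1 - p)), hX.shift_mem hw _, p - k, by omega, fun j h1 h2 => ?_, ?_⟩
  · refine (hwx (j + (1 - p)) (by omega) (by omega)).trans (congrArg x ?_)
    ring
  · convert hk.shift hX (1 - p) using 1 <;> ring

theorem exists_agree_of_forall_inOmegaPlus {z w : ℤ → A} {c l r : ℤ}
    (hz : ∀ i : ℤ, l ≤ i → i ≤ r → InOmegaPlus X z c i) (hlr : l - 1 ≤ r) (hw : w ∈ X)
    (hwz : ∀ j : ℤ, c ≤ j → j < l → w j = z j) :
    ∃ w' ∈ X, (∀ j : ℤ, j < l → w' j = w j) ∧ ∀ j : ℤ, c ≤ j → j ≤ r → w' j = z j := by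
  induction r, hlr using Int.leInduction with
  | base => exact ⟨w, hw, fun _ _ => rfl, fun j h1 h2 => hwz j h1 (by omega)⟩
  | succ r hr ih =>
    obtain ⟨w', hw', hw'w, hw'z⟩ := ih fun i h1 h2 => hz i h1 (by omega)
    obtain ⟨w'', hw'', hw''w', hw''r⟩ :=
      hz (r + 1) (by omega) le_rfl w' hw' fun j h1 h2 => hw'z j h1 (by omega)
    refine ⟨w'', hw'', fun j hj => (hw''w' j (by omega)).trans (hw'w j hj), fun j h1 h2 => ?_⟩
    rcases h2.lt_or_eq with h2 | rfl
    · rw [hw''w' j h2, hw'z j h1 (by omega)]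
    · exact hw''r

theorem PropertyD.exists_inOmegaPlus_Icc_sub_one [TopologicalSpace A] (hX : IsSubshift X)
    (hD : PropertyD X) {z : ℤ → A} {c l r : ℤ} (hz : z ∈ X)
    (hzc : ∀ i : ℤ, l ≤ i → i ≤ r → InOmegaPlus X z c i) (hcl : c < l) (hlr : l ≤ r + 1) :
    ∃ z' ∈ X, ∃ c' ≤ c, (∀ j : ℤ, c ≤ j → j ≤ r → z' j = z j) ∧
      ∀ i : ℤ, l - 1 ≤ i → i ≤ r → InOmegaPlus X z' c' i := by
  obtain ⟨w, hw, c', hc', hwz, hwc⟩ := hD.exists_inOmegaPlus hX hz (l - 1) c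
  obtain ⟨z', hz', hz'w, hz'z⟩ :=
    exists_agree_of_forall_inOmegaPlus hzc (by omega) hw fun j h1 h2 => hwz j h1 (by omega)
  refine ⟨z', hz', c', hc', hz'z, fun i h1 h2 => ?_⟩
  rcases h1.eq_or_lt with rfl | h1
  · exact hwc.mono le_rfl (fun j _ hj => hz'w j (by omega)) (hz'w _ (by omega))
  · exact (hzc i (by omega) h2).mono hc' (fun j hj _ => hz'z j hj (by omega))
      (hz'z i (by omega) h2)

theorem PropertyD.exists_inOmegaPlus_Icc [TopologicalSpace A] (hX : IsSubshift X)
    (hD : PropertyD X) {x : ℤ → A} (hx : x ∈ X) {a l r : ℤ} (hal : a ≤ l) (hlr : l ≤ r + 1) :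
    ∃ z ∈ X, ∃ c ≤ a, (∀ j : ℤ, a ≤ j → j ≤ r → z j = x j) ∧
      ∀ i : ℤ, l ≤ i → i ≤ r → InOmegaPlus X z c i := by
  induction l, hlr using Int.leInductionDown with
  | base => exact ⟨x, hx, a, le_rfl, fun _ _ _ => rfl, fun i h1 h2 => absurd h2 (by omega)⟩
  | pred l hl ih =>
    obtain ⟨z, hz, c, hca, hzx, hzc⟩ := ih (by omega)
    obtain ⟨z', hz', c', hc', hz'z, hz'c⟩ :=
      hD.exists_inOmegaPlus_Icc_sub_one hX hz hzc (by omega) hl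
    exact ⟨z', hz', c', hc'.trans hca,
      fun j h1 h2 => (hz'z j (by omega) h2).trans (hzx j h1 h2), hz'c⟩

theorem PropertyD.dense_ESetAt [TopologicalSpace A] [DiscreteTopology A] (hX : IsSubshift X)
    (hD : PropertyD X) (i : ℤ) : Dense (Subtype.val ⁻¹' ESetAt X i : Set X) := by
  refine dense_preimage_val_iff.2 fun x hx a b => ?_
  obtain ⟨z, hz, c, hc, hzx, hzc⟩ :=
    hD.exists_inOmegaPlus_Icc hX hx (min_le_right a i) (by omega : i ≤ max b i + 1)
  refine ⟨z, ⟨hz, (i - c).toNat, ?_⟩, fun j h1 h2 => hzx j (by omega) (by omega)⟩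
  exact (hzc i le_rfl (le_max_right b i)).mono (by omega) (fun _ _ _ => rfl) rfl

theorem PropertyD.dense_ESet [Fintype A] [TopologicalSpace A] [DiscreteTopology A]
    (hX : IsSubshift X) (hD : PropertyD X) : Dense (Subtype.val ⁻¹' ESet X : Set X) := by
  have : CompactSpace X := isCompact_iff_compactSpace.mp hX.1.isCompact
  rw [ESet_eq_inter_iInter_ESetAt, preimage_inter, Subtype.coe_preimage_self, univ_inter,
    preimage_iInter]
  exact dense_iInter_of_isOpen (fun i => (isOpen_ESetAt i).preimage continuous_subtype_val)
    (hD.dense_ESetAt hX)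

theorem propertyD_of_dense_ESet [TopologicalSpace A] [DiscreteTopology A]
    (h : Dense (Subtype.val ⁻¹' ESet X : Set X)) : PropertyD X := by
  intro x hx m
  obtain ⟨e, ⟨he, -, heE⟩, hex⟩ := dense_preimage_val_iff.1 h x hx (1 - m) 1
  obtain ⟨k, hk⟩ := mem_iInter.1 heE 1
  refine ⟨max m k, e, he, le_max_left _ _, fun j h1 h2 => hex j (by omega) (by omega),
    fun z hz hze => ?_⟩
  obtain ⟨z', hz', hz'z, hz'1⟩ := hk z hz fun j h1 h2 => hze j (by omega) (by omega)
  exact ⟨z', hz', fun i hi => hz'z i (by omega), hz'1.trans (hex 1 (by omega) le_rfl)⟩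

end

/-- A subshift has property (D) if and only if `E(X)` is dense in `X`. -/
theorem propertyD_iff_dense_ESet {A : Type*} [Fintype A] [TopologicalSpace A]
    [DiscreteTopology A] (X : Set (ℤ → A)) (hX : IsSubshift X) :
    PropertyD X ↔ Dense (Subtype.val ⁻¹' ESet X : Set X) :=
  ⟨PropertyD.dense_ESet hX, propertyD_of_dense_ESet⟩
end

section
/- Let $X \subset \Sigma^{\mathbb{Z}}$ be a subshift, $k \in \mathbb{N}$, and let $A^-$ be a residual subset of $X_{(-\infty,k]}$. Then the set $\{x^- \in X_{(-\infty,0]} : (x^-, a) \in A^- \text{ for all } a \in \Gamma^+_k(x^-)\}$ is residual in $X_{(-\infty,0]}$. -/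
open Set

/-- The space of left-infinite configurations on `(-∞,k]`. -/
abbrev PastSpaceUpTo (A : Type*) (k : ℤ) := {i : ℤ // i ≤ k} → A

/-- Restriction of a bi-infinite point to `(-∞,k]`. -/
def projUpTo {A : Type*} (k : ℤ) (x : ℤ → A) : PastSpaceUpTo A k := fun j => x j.1

/-- Dense-open whole-fiber lemma, density part. -/
theorem dense_fiber {Z F : Type*} [TopologicalSpace Z] [TopologicalSpace F] [Finite F]
    [DiscreteTopology F] (Y : Set (Z × F)) (hY : IsClosed Y)
    (U : Set ↥Y) (hUo : IsOpen U) (hUd : Dense U) :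
    IsOpen {z | ∀ f, (z, f) ∈ Y → (z, f) ∈ Subtype.val '' U} ∧
    Dense {z | ∀ f, (z, f) ∈ Y → (z, f) ∈ Subtype.val '' U} := by
  classical
  obtain ⟨O, hOo, hOU⟩ := isOpen_induced_iff.mp hUo
  have hval : Subtype.val '' U = Y ∩ O := by
    rw [← hOU, Subtype.image_preimage_coe]
  rw [hval]
  have hD : {z | ∀ f, (z, f) ∈ Y → (z, f) ∈ Y ∩ O} = {z | ∀ f, (z, f) ∈ Y → (z, f) ∈ O} := by
    ext z
    simp only [mem_setOf_eq, mem_inter_iff]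
    exact ⟨fun h f hf => (h f hf).2, fun h f hf => ⟨hf, h f hf⟩⟩
  rw [hD]
  constructor
  · rw [← isClosed_compl_iff]
    have : {z | ∀ f, (z, f) ∈ Y → (z, f) ∈ O}ᶜ = ⋃ f, {z | (z, f) ∈ Y ∧ (z, f) ∈ Oᶜ} := by
      ext z; simp [not_forall]
    rw [this]
    refine isClosed_iUnion_of_finite fun f => ?_
    have : {z | (z, f) ∈ Y ∧ (z, f) ∈ Oᶜ} = (fun z => (z, f)) ⁻¹' (Y ∩ Oᶜ) := rfl
    rw [this]
    exact (hY.inter hOo.isClosed_compl).preimage (continuous_id.prodMk continuous_const)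
  · rw [dense_iff_inter_open]
    rintro W hWo hWne
    have := Fintype.ofFinite F
    -- strong induction on the size of a "fiber alphabet" over an open subset of W
    have main : ∀ n (S : Finset F), S.card ≤ n →
        ∀ W' : Set Z, IsOpen W' → W'.Nonempty → W' ⊆ W →
        (∀ z ∈ W', ∀ f, (z, f) ∈ Y → f ∈ S) →
        (W ∩ {z | ∀ f, (z, f) ∈ Y → (z, f) ∈ O}).Nonempty := by
      intro n
      induction n with
      | zero =>
        intro S hS W' hW'o hW'ne hW'W hfib
        obtain ⟨z, hz⟩ := hW'ne
        refine ⟨z, hW'W hz, fun f hf => absurd (hfib z hz f hf) ?_⟩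
        simp [Finset.card_eq_zero.mp (le_antisymm hS (Nat.zero_le _))]
      | succ n ih =>
        intro S hS W' hW'o hW'ne hW'W hfib
        by_cases hall : ∀ f ∈ S, ∀ z ∈ W', (z, f) ∈ Y
        · -- every letter of S appears in every fiber over W'; intersect slices with U
          have slice : ∀ (T : Finset F), (∀ f ∈ T, f ∈ S) →
              ∀ W₀ : Set Z, IsOpen W₀ → W₀.Nonempty → W₀ ⊆ W' →
              (W₀ ∩ ⋂ f ∈ T, {z | (z, f) ∈ O}).Nonempty := by
            intro T hTS
            induction T using Finset.induction with
            | empty => intro W₀ _ hne _; simpa using hne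
            | @insert f T hfT ihT =>
              intro W₀ hW₀o hW₀ne hW₀W'
              have hfS : f ∈ S := hTS f (Finset.mem_insert_self f T)
              -- find a point of U in the slice W₀ × {f}
              obtain ⟨z₀, hz₀⟩ := hW₀ne
              have hz₀Y : (z₀, f) ∈ Y := hall f hfS z₀ (hW₀W' hz₀)
              have hopen : IsOpen (Subtype.val ⁻¹' (W₀ ×ˢ ({f} : Set F)) : Set ↥Y) :=
                (hW₀o.prod (isOpen_discrete _)).preimage continuous_subtype_val
              have hne : (Subtype.val ⁻¹' (W₀ ×ˢ ({f} : Set F)) : Set ↥Y).Nonempty :=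
                ⟨⟨(z₀, f), hz₀Y⟩, by simp [hz₀]⟩
              obtain ⟨y, hy1, hy2⟩ := hUd.inter_open_nonempty _ hopen hne
              have hyO : (y : Z × F) ∈ O := by rw [← hOU] at hy2; exact hy2
              simp only [mem_preimage, mem_prod, mem_singleton_iff] at hy1
              set z₁ := (y : Z × F).1 with hz₁
              have hW₁o : IsOpen (W₀ ∩ {z | (z, f) ∈ O}) :=
                hW₀o.inter (hOo.preimage (continuous_id.prodMk continuous_const))
              have hW₁ne : (W₀ ∩ {z | (z, f) ∈ O}).Nonempty := by
                refine ⟨z₁, hy1.1, ?_⟩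
                show (z₁, f) ∈ O
                have : (z₁, f) = (y : Z × F) := by
                  rw [hz₁, ← hy1.2]
                rw [this]; exact hyO
              obtain ⟨z, hz1, hz2⟩ := ihT (fun g hg => hTS g (Finset.mem_insert_of_mem hg))
                _ hW₁o hW₁ne (fun x hx => hW₀W' hx.1)
              refine ⟨z, hz1.1, mem_iInter₂.mpr fun g hg => ?_⟩
              rcases Finset.mem_insert.mp hg with rfl | hg
              · exact hz1.2
              · exact mem_iInter₂.mp hz2 g hg
          obtain ⟨z, hz1, hz2⟩ := slice S (fun f hf => hf) W' hW'o hW'ne subset_rfl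
          refine ⟨z, hW'W hz1, fun f hf => ?_⟩
          exact mem_iInter₂.mp hz2 f (hfib z hz1 f hf)
        · push_neg at hall
          obtain ⟨f₀, hf₀S, z₀, hz₀W', hz₀Y⟩ := hall
          have hW''o : IsOpen (W' ∩ {z | (z, f₀) ∉ Y}) :=
            hW'o.inter (hY.preimage (continuous_id.prodMk continuous_const)).isOpen_compl
          refine ih (S.erase f₀) ?_ _ hW''o ⟨z₀, hz₀W', hz₀Y⟩ (fun x hx => hW'W hx.1) ?_
          · have := Finset.card_erase_lt_of_mem hf₀S
            omega
          · intro z hz f hf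
            refine Finset.mem_erase.mpr ⟨?_, hfib z hz.1 f hf⟩
            rintro rfl; exact hz.2 hf
    exact main _ Finset.univ le_rfl W hWo hWne subset_rfl (fun _ _ _ _ => Finset.mem_univ _)

theorem key_residual {Z F : Type*} [TopologicalSpace Z] [TopologicalSpace F] [Finite F]
    [DiscreteTopology F] (Y : Set (Z × F)) (hY : IsClosed Y) (S : Set (Z × F))
    (hres : (Subtype.val ⁻¹' S : Set ↥Y) ∈ residual ↥Y) :
    {z | ∀ f, (z, f) ∈ Y → (z, f) ∈ S} ∈ residual Z := by
  obtain ⟨T, hTo, hTd, hTc, hTsub⟩ := mem_residual_iff.mp hres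
  have hD : ∀ U ∈ T, {z | ∀ f, (z, f) ∈ Y → (z, f) ∈ Subtype.val '' U} ∈ residual Z := by
    intro U hU
    obtain ⟨ho, hd⟩ := dense_fiber Y hY U (hTo U hU) (hTd U hU)
    exact residual_of_dense_open ho hd
  have hmem : (⋂ U ∈ T, {z | ∀ f, (z, f) ∈ Y → (z, f) ∈ Subtype.val '' U}) ∈ residual Z :=
    (countable_bInter_mem hTc).mpr hD
  refine Filter.mem_of_superset hmem ?_
  intro z hz f hf
  have : (⟨(z, f), hf⟩ : ↥Y) ∈ ⋂₀ T := by
    intro U hU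
    obtain ⟨y, hyU, hy⟩ := mem_iInter₂.mp hz U hU f hf
    rwa [show y = (⟨(z, f), hf⟩ : ↥Y) from Subtype.ext hy] at hyU
  exact hTsub this

theorem residual_preimage_homeo {X Y : Type*} [TopologicalSpace X] [TopologicalSpace Y]
    (e : X ≃ₜ Y) {s : Set Y} (hs : s ∈ residual Y) : e ⁻¹' s ∈ residual X := by
  obtain ⟨T, hTo, hTd, hTc, hTsub⟩ := mem_residual_iff.mp hs
  refine mem_residual_iff.mpr ⟨(fun t => e ⁻¹' t) '' T, ?_, ?_, hTc.image _, ?_⟩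
  · rintro t ⟨u, hu, rfl⟩; exact (hTo u hu).preimage e.continuous
  · rintro t ⟨u, hu, rfl⟩
    have : (fun t => e ⁻¹' t) u = e.symm '' u := by
      ext x
      constructor
      · intro hx; exact ⟨e x, hx, e.symm_apply_apply x⟩
      · rintro ⟨y, hy, rfl⟩
        show e (e.symm y) ∈ u
        rwa [e.apply_symm_apply]
    rw [this]
    exact e.symm.surjective.denseRange.dense_image e.symm.continuous (hTd u hu)
  · rw [sInter_image]
    rw [← preimage_sInter]
    exact preimage_mono hTsub

section glue
variable {A : Type*} [Fintype A] [TopologicalSpace A] [DiscreteTopology A]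

/-- Glue a past (on `(-∞,0]`) lying over `X` with a word on `(0,k]`. -/
def glueP (k : ℕ) (X : Set (ℤ → A))
    (p : ↥(projUpTo (0 : ℤ) '' X) × ({i : ℤ // 0 < i ∧ i ≤ (k : ℤ)} → A)) :
    PastSpaceUpTo A (k : ℤ) :=
  fun j => if h : j.1 ≤ 0 then p.1.1 ⟨j.1, h⟩ else p.2 ⟨j.1, ⟨not_le.mp h, j.2⟩⟩

lemma continuous_glueP (k : ℕ) (X : Set (ℤ → A)) : Continuous (glueP k X) := by
  refine continuous_pi fun j => ?_
  rcases le_or_gt j.1 0 with h | h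
  · simp only [glueP, dif_pos h]
    exact (continuous_apply _).comp (continuous_subtype_val.comp continuous_fst)
  · simp only [glueP, dif_neg (not_le.mpr h)]
    exact (continuous_apply _).comp continuous_snd

end glue

/-- If `A⁻` is residual in `X_{(-∞,k]}`, then the set of pasts `x⁻ ∈ X_{(-∞,0]}` all of
whose `k`-step continuations `(x⁻,a)`, `a ∈ Γ_k⁺(x⁻)`, lie in `A⁻`, is residual in
`X_{(-∞,0]}`.  (The continuations `(x⁻,a)` are realized as `y_{(-∞,k]}` for points
`y ∈ X` with `y_{(-∞,0]} = x_{(-∞,0]}`.) -/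

theorem residual_pullback {A : Type*} [Fintype A] [TopologicalSpace A] [DiscreteTopology A]
    (X : Set (ℤ → A)) (hX : IsSubshift X) (k : ℕ)
    (Am : Set (PastSpaceUpTo A k)) (hAmX : Am ⊆ projUpTo (k : ℤ) '' X)
    (hAm : (Subtype.val ⁻¹' Am : Set ↥(projUpTo (k : ℤ) '' X)) ∈
      residual ↥(projUpTo (k : ℤ) '' X)) :
    (Subtype.val ⁻¹'
        (projUpTo 0 '' (X ∩ {x | ∀ y ∈ X, (∀ i : ℤ, i ≤ 0 → y i = x i) →
          projUpTo (k : ℤ) y ∈ Am})) : Set ↥(projUpTo 0 '' X)) ∈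
      residual ↥(projUpTo 0 '' X) := by
  classical
  haveI : Finite {i : ℤ // 0 < i ∧ i ≤ (k : ℤ)} := by
    have : {i : ℤ | 0 < i ∧ i ≤ (k : ℤ)}.Finite :=
      (Set.finite_Icc 1 (k : ℤ)).subset (fun i hi => Set.mem_Icc.mpr ⟨hi.1, hi.2⟩)
    exact this.to_subtype
  have hprojcont : ∀ m : ℤ, Continuous (projUpTo (A := A) m) :=
    fun m => continuous_pi fun j => continuous_apply _
  have hYk : IsClosed (projUpTo (k : ℤ) '' X) :=
    ((hX.1.isCompact).image (hprojcont _)).isClosed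
  set F := ({i : ℤ // 0 < i ∧ i ≤ (k : ℤ)} → A) with hF
  set Zt := ↥(projUpTo (0 : ℤ) '' X) with hZt
  set Y : Set (Zt × F) := glueP k X ⁻¹' (projUpTo (k : ℤ) '' X) with hYdef
  have hYclosed : IsClosed Y := hYk.preimage (continuous_glueP k X)
  -- the homeomorphism between Y and the space of pasts up to k
  have memz : ∀ p : ↥(projUpTo (k : ℤ) '' X),
      (fun j => p.1 ⟨j.1, j.2.trans (Int.natCast_nonneg k)⟩ : PastSpaceUpTo A 0) ∈
        projUpTo (0 : ℤ) '' X := by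
    rintro ⟨p, x, hxX, rfl⟩
    exact ⟨x, hxX, rfl⟩
  have gluemem : ∀ p : ↥(projUpTo (k : ℤ) '' X),
      glueP k X (⟨_, memz p⟩, fun j => p.1 ⟨j.1, j.2.2⟩) = p.1 := by
    intro p
    funext j
    rcases le_or_gt j.1 0 with h | h
    · simp only [glueP, dif_pos h]
    · simp only [glueP, dif_neg (not_le.mpr h)]
  let e : ↥Y ≃ₜ ↥(projUpTo (k : ℤ) '' X) :=
    { toFun := fun y => ⟨glueP k X y.1, y.2⟩
      invFun := fun p => ⟨(⟨_, memz p⟩, fun j => p.1 ⟨j.1, j.2.2⟩),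
        Set.mem_preimage.mpr (by rw [gluemem p]; exact p.2)⟩
      left_inv := by
        rintro ⟨⟨z, f⟩, hy⟩
        refine Subtype.ext (Prod.ext (Subtype.ext (funext fun j => ?_)) (funext fun j => ?_))
        · show glueP k X (z, f) ⟨j.1, _⟩ = z.1 j
          simp only [glueP, dif_pos j.2]
        · show glueP k X (z, f) ⟨j.1, _⟩ = f j
          simp only [glueP, dif_neg (not_le.mpr j.2.1)]
      right_inv := fun p => Subtype.ext (gluemem p)
      continuous_toFun := by
        refine Continuous.subtype_mk ?_ _
        exact (continuous_glueP k X).comp continuous_subtype_val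
      continuous_invFun := by
        refine Continuous.subtype_mk (Continuous.prodMk ?_ ?_) _
        · refine Continuous.subtype_mk ?_ _
          exact continuous_pi fun j => (continuous_apply _).comp continuous_subtype_val
        · exact continuous_pi fun j => (continuous_apply _).comp continuous_subtype_val }
  have hres : (Subtype.val ⁻¹' (glueP k X ⁻¹' Am) : Set ↥Y) ∈ residual ↥Y := by
    exact residual_preimage_homeo e hAm
  have hkey := key_residual Y hYclosed (glueP k X ⁻¹' Am) hres
  refine Filter.mem_of_superset hkey ?_
  rintro z hz
  obtain ⟨x, hxX, hxz⟩ := z.2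
  refine ⟨x, ⟨hxX, ?_⟩, hxz⟩
  intro y hyX hagree
  set f : F := fun j => y j.1 with hf
  have hglue : glueP k X (z, f) = projUpTo (k : ℤ) y := by
    funext j
    rcases le_or_gt j.1 0 with h | h
    · simp only [glueP, dif_pos h]
      have h1 : z.1 ⟨j.1, h⟩ = x j.1 := by rw [← hxz]; rfl
      rw [h1, ← hagree j.1 h]
      rfl
    · simp only [glueP, dif_neg (not_le.mpr h)]
      rfl
  have hzY : (z, f) ∈ Y := Set.mem_preimage.mpr (by rw [hglue]; exact ⟨y, hyX, rfl⟩)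
  have h2 : glueP k X (z, f) ∈ Am := hz f hzY
  rwa [hglue] at h2
end

section
/- Let $(F,\mathcal{F})$ be a measurable space with a decreasing sequence of measurable sets $F_i \supset F_{i+1}$, $i \in \mathbb{Z}$, such that $F = \bigcup_{k\in\mathbb{N}} F_{-k}$. Let $\mathcal{H}$ be the set of $\sigma$-finite measures $\mu$ on $F$ with $0 < \mu(F_i) < \infty$ for all $i$, modulo scale equivalence ($\mu \sim \alpha\mu$ for $\alpha > 0$), and let $H$ be the set of sequences $(\mu_i)_{i\in\mathbb{Z}}$ of probability measures, $\mu_i$ a probability measure on $F_i$, with $\mu_i(F_{i+1}) > 0$ and $\mu_{i+1} = \mu_i|_{F_{i+1}}/\mu_i(F_{i+1})$ for all $i$. Then the map $\eta([\mu]) = (\mu|_{F_i}/\mu(F_i))_{i\in\mathbb{Z}}$ is a well-defined bijection from $\mathcal{H}/\sim$ onto $H$. -/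
open MeasureTheory Set

variable {F : Type*} [MeasurableSpace F]

/-- `𝓗((F_i))`: σ-finite measures with `0 < μ(F_i) < ∞` for all `i`. -/
def HClass (Fi : ℤ → Set F) : Set (Measure F) :=
  {μ | SigmaFinite μ ∧ ∀ i : ℤ, 0 < μ (Fi i) ∧ μ (Fi i) < ⊤}

/-- `H((F_i))`: sequences `(μ_i)` of probability measures, `μ_i` concentrated on `F_i`,
with `μ_i(F_{i+1}) > 0` and `μ_{i+1}` the normalized restriction of `μ_i` to `F_{i+1}`. -/
def HSeq (Fi : ℤ → Set F) : Set (ℤ → Measure F) :=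
  {ν | ∀ i : ℤ, ν i Set.univ = 1 ∧ ν i (Fi i) = 1 ∧ 0 < ν i (Fi (i + 1)) ∧
    ν (i + 1) = (ν i (Fi (i + 1)))⁻¹ • (ν i).restrict (Fi (i + 1))}

/-- The map `η : μ ↦ (μ|_{F_i} / μ(F_i))_{i ∈ ℤ}`. -/
noncomputable def etaMap (Fi : ℤ → Set F) (μ : Measure F) : ℤ → Measure F :=
  fun i => (μ (Fi i))⁻¹ • μ.restrict (Fi i)

/-!
Write `μ[|s] = (μ s)⁻¹ • μ.restrict s` for conditioning, so that `η μ i = μ[|F_i]`.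
Rescaling `μ` so that `F_0` has mass one commutes with conditioning on every `F_{-k} ⊇ F_0`.
Hence `η μ` determines this rescaled measure on each `F_{-k}`, and so on `F = ⋃ F_{-k}`: this is
injectivity modulo scaling. Conversely, for `ν ∈ H` the measures `ν_{-k}` rescaled to give `F_0`
mass one are compatible under restriction to the `F_{-j}`, `j ≤ k`, and glue to a measure on `F`
whose image under `η` is `ν`.
-/

open ProbabilityTheory ENNReal NNReal

section General

variable {α : Type*} [MeasurableSpace α] {μ : Measure α} {s t : Set α}

lemma cond_smul_measure {c : ℝ≥0∞} (hc0 : c ≠ 0) (hc : c ≠ ∞) : (c • μ)[|s] = μ[|s] := by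
  simp only [ProbabilityTheory.cond, Measure.smul_apply, smul_eq_mul, Measure.restrict_smul,
    smul_smul]
  rw [ENNReal.mul_inv (.inl hc0) (.inl hc), mul_right_comm, ENNReal.inv_mul_cancel hc0 hc, one_mul]

lemma cond_restrict_self : (μ.restrict s)[|s] = μ[|s] := by
  simp only [ProbabilityTheory.cond, Measure.restrict_apply_self,
    Measure.restrict_restrict_of_subset subset_rfl]

lemma cond_cond_of_subset (hs : MeasurableSet s) (ht : MeasurableSet t) (hts : t ⊆ s)
    (hμs : μ s ≠ ∞) : μ[|s][|t] = μ[|t] := by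
  rw [cond_cond_eq_cond_inter' hs ht hμs, inter_eq_right.2 hts]

lemma cond_eq_self [IsProbabilityMeasure μ] (hs : MeasurableSet s) (h : μ s = 1) :
    μ[|s] = μ := by
  rw [ProbabilityTheory.cond, h, inv_one, one_smul]
  exact Measure.restrict_eq_self_of_ae_mem ((prob_compl_eq_zero_iff hs).2 h)

lemma restrict_inv_smul_eq_inv_smul_cond (ht : MeasurableSet t) (hst : s ⊆ t)
    (h0 : μ t ≠ 0) (htop : μ t ≠ ∞) :
    ((μ s)⁻¹ • μ).restrict t = (μ[|t] s)⁻¹ • μ[|t] := by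
  rw [cond_apply ht, inter_eq_right.2 hst, ProbabilityTheory.cond, smul_smul, Measure.restrict_smul,
    ENNReal.mul_inv (.inl (ENNReal.inv_ne_zero.2 htop)) (.inl (ENNReal.inv_ne_top.2 h0)), inv_inv,
    mul_comm (μ t), mul_assoc, ENNReal.mul_inv_cancel h0 htop, mul_one]

lemma inv_smul_eq_of_cond_eq {ι : Type*} [Countable ι] {μ' : Measure α} {G : ι → Set α}
    (hG : ∀ k, MeasurableSet (G k)) (hcover : ⋃ k, G k = univ) (hsG : ∀ k, s ⊆ G k)
    (hμ : ∀ k, μ (G k) ≠ 0 ∧ μ (G k) ≠ ∞) (hμ' : ∀ k, μ' (G k) ≠ 0 ∧ μ' (G k) ≠ ∞)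
    (h : ∀ k, μ[|G k] = μ'[|G k]) : (μ s)⁻¹ • μ = (μ' s)⁻¹ • μ' := by
  refine Measure.ext_of_iUnion_eq_univ hcover fun k => ?_
  rw [restrict_inv_smul_eq_inv_smul_cond (hG k) (hsG k) (hμ k).1 (hμ k).2,
    restrict_inv_smul_eq_inv_smul_cond (hG k) (hsG k) (hμ' k).1 (hμ' k).2, h k]

lemma exists_restrict_eq_of_compatible {G : ℕ → Set α} (hG : ∀ k, MeasurableSet (G k))
    {m : ℕ → Measure α} (hm : ∀ j k, j ≤ k → (m k).restrict (G j) = m j) :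
    ∃ μ : Measure α, ∀ n, μ.restrict (G n) = m n := by
  have hslice : ∀ n k, ((m k).restrict (disjointed G k)).restrict (G n) =
      ((m n).restrict (disjointed G k)).restrict (G n) := by
    intro n k
    have hsub : G n ∩ disjointed G k ⊆ G (min n k) := by
      rcases le_total n k with h | h
      · simp [min_eq_left h]
      · simpa [min_eq_right h] using inter_subset_right.trans (disjointed_le G k)
    rw [Measure.restrict_restrict (hG n), Measure.restrict_restrict (hG n),
      ← Measure.restrict_restrict_of_subset hsub, hm _ _ (min_le_right n k),
      ← Measure.restrict_restrict_of_subset (μ := m n) hsub, hm _ _ (min_le_left n k)]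
  refine ⟨Measure.sum fun k => (m k).restrict (disjointed G k), fun n => ?_⟩
  rw [Measure.restrict_sum_of_countable, funext (hslice n), ← Measure.restrict_sum_of_countable,
    ← Measure.restrict_iUnion (disjoint_disjointed G) (MeasurableSet.disjointed hG),
    iUnion_disjointed, Measure.restrict_restrict_of_subset (subset_iUnion G n), ← hm n n le_rfl,
    Measure.restrict_restrict_of_subset subset_rfl]

end General

section Sequences

variable {Fi : ℤ → Set F}

lemma etaMap_apply (μ : Measure F) (i : ℤ) : etaMap Fi μ i = μ[|Fi i] := rfl

lemma etaMap_smul {μ : Measure F} {c : ℝ≥0∞} (hc0 : c ≠ 0) (hc : c ≠ ∞) :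
    etaMap Fi (c • μ) = etaMap Fi μ :=
  funext fun _ => cond_smul_measure hc0 hc

lemma etaMap_mem_HSeq (hmeas : ∀ i, MeasurableSet (Fi i)) (hdec : ∀ i : ℤ, Fi (i + 1) ⊆ Fi i)
    {μ : Measure F} (hμ : ∀ i, 0 < μ (Fi i) ∧ μ (Fi i) < ⊤) : etaMap Fi μ ∈ HSeq Fi := by
  intro i
  have hne0 := (hμ i).1.ne'
  have hnetop := (hμ i).2.ne
  have := cond_isProbabilityMeasure_of_finite hne0 hnetop
  refine ⟨this.measure_univ, ?_, ?_, (cond_cond_of_subset (hmeas i) (hmeas _) (hdec i) hnetop).symm⟩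
  · rw [etaMap_apply, cond_apply (hmeas i), inter_self, ENNReal.inv_mul_cancel hne0 hnetop]
  · rw [etaMap_apply, cond_apply (hmeas i), inter_eq_right.2 (hdec i)]
    exact ENNReal.mul_pos (ENNReal.inv_ne_zero.2 hnetop) (hμ (i + 1)).1.ne'

lemma isProbabilityMeasure_of_mem_HSeq {ν : ℤ → Measure F} (hν : ν ∈ HSeq Fi) (i : ℤ) :
    IsProbabilityMeasure (ν i) :=
  ⟨(hν i).1⟩

lemma eq_cond_of_mem_HSeq (hmeas : ∀ i, MeasurableSet (Fi i))
    (hdec : ∀ i : ℤ, Fi (i + 1) ⊆ Fi i) {ν : ℤ → Measure F} (hν : ν ∈ HSeq Fi) {i j : ℤ}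
    (hij : i ≤ j) : ν j = (ν i)[|Fi j] := by
  have := isProbabilityMeasure_of_mem_HSeq hν
  induction j, hij using Int.leInduction with
  | base => exact (cond_eq_self (hmeas i) (hν i).2.1).symm
  | succ j _ ih =>
    calc ν (j + 1) = (ν j)[|Fi (j + 1)] := (hν j).2.2.2
      _ = (ν i)[|Fi (j + 1)] := by
        rw [ih, cond_cond_of_subset (hmeas j) (hmeas _) (hdec j) (measure_ne_top _ _)]

lemma measure_ne_zero_of_mem_HSeq (hmeas : ∀ i, MeasurableSet (Fi i))
    (hdec : ∀ i : ℤ, Fi (i + 1) ⊆ Fi i) {ν : ℤ → Measure F} (hν : ν ∈ HSeq Fi) {i j : ℤ}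
    (hij : i ≤ j) : ν i (Fi j) ≠ 0 := by
  intro h
  have hj := (hν j).1
  rw [eq_cond_of_mem_HSeq hmeas hdec hν hij, cond_eq_zero_of_meas_eq_zero h] at hj
  simp at hj

lemma exists_eq_smul_of_etaMap_eq (hmeas : ∀ i, MeasurableSet (Fi i))
    (hdec : ∀ i : ℤ, Fi (i + 1) ⊆ Fi i) (hcover : ⋃ k : ℕ, Fi (-(k : ℤ)) = univ)
    {μ μ' : Measure F} (hμ : ∀ i, 0 < μ (Fi i) ∧ μ (Fi i) < ⊤)
    (hμ' : ∀ i, 0 < μ' (Fi i) ∧ μ' (Fi i) < ⊤) (h : etaMap Fi μ = etaMap Fi μ') :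
    ∃ c : ℝ≥0, 0 < c ∧ μ' = (c : ℝ≥0∞) • μ := by
  have hanti : Antitone Fi := antitone_int_of_succ_le hdec
  have hnorm : (μ (Fi 0))⁻¹ • μ = (μ' (Fi 0))⁻¹ • μ' :=
    inv_smul_eq_of_cond_eq (fun _ => hmeas _) hcover (fun k => hanti (by omega))
      (fun _ => ⟨(hμ _).1.ne', (hμ _).2.ne⟩) (fun _ => ⟨(hμ' _).1.ne', (hμ' _).2.ne⟩)
      (fun k => congrFun h (-(k : ℤ)))
  have hc0 : μ' (Fi 0) * (μ (Fi 0))⁻¹ ≠ 0 :=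
    mul_ne_zero (hμ' 0).1.ne' (ENNReal.inv_ne_zero.2 (hμ 0).2.ne)
  have hctop : μ' (Fi 0) * (μ (Fi 0))⁻¹ ≠ ∞ :=
    ENNReal.mul_ne_top (hμ' 0).2.ne (ENNReal.inv_ne_top.2 (hμ 0).1.ne')
  refine ⟨(μ' (Fi 0) * (μ (Fi 0))⁻¹).toNNReal, ENNReal.toNNReal_pos hc0 hctop, ?_⟩
  rw [ENNReal.coe_toNNReal hctop, mul_smul, hnorm, smul_smul,
    ENNReal.mul_inv_cancel (hμ' 0).1.ne' (hμ' 0).2.ne, one_smul]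

lemma exists_mem_HClass_etaMap_eq (hmeas : ∀ i, MeasurableSet (Fi i))
    (hdec : ∀ i : ℤ, Fi (i + 1) ⊆ Fi i) (hcover : ⋃ k : ℕ, Fi (-(k : ℤ)) = univ)
    {ν : ℤ → Measure F} (hν : ν ∈ HSeq Fi) : ∃ μ ∈ HClass Fi, etaMap Fi μ = ν := by
  have hanti : Antitone Fi := antitone_int_of_succ_le hdec
  have := isProbabilityMeasure_of_mem_HSeq hν
  have hne0 := fun {i j : ℤ} (hij : i ≤ j) => measure_ne_zero_of_mem_HSeq hmeas hdec hν hij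
  set m : ℕ → Measure F := fun k => (ν (-k) (Fi 0))⁻¹ • ν (-k) with hm
  have hcompat : ∀ j k, j ≤ k → (m k).restrict (Fi (-j)) = m j := fun j k hjk => by
    rw [hm, restrict_inv_smul_eq_inv_smul_cond (hmeas _) (hanti (by omega)) (hne0 (by omega))
      (measure_ne_top _ _), ← eq_cond_of_mem_HSeq hmeas hdec hν (by omega)]
  obtain ⟨μ, hμ⟩ := exists_restrict_eq_of_compatible (fun k => hmeas (-k)) hcompat
  have hle : ∀ i : ℤ, -((-i).toNat : ℤ) ≤ i := fun i => by omega
  have hμ_apply : ∀ i, μ (Fi i) = (ν (-(-i).toNat) (Fi 0))⁻¹ * ν (-(-i).toNat) (Fi i) := by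
    intro i
    rw [← Measure.restrict_eq_self μ (hanti (hle i)), hμ, hm, Measure.smul_apply, smul_eq_mul]
  have hμF : ∀ i, 0 < μ (Fi i) ∧ μ (Fi i) < ⊤ := fun i => by
    rw [hμ_apply]
    exact ⟨ENNReal.mul_pos (ENNReal.inv_ne_zero.2 (measure_ne_top _ _)) (hne0 (hle i)),
      ENNReal.mul_lt_top (ENNReal.inv_lt_top.2 (pos_iff_ne_zero.2 (hne0 (by omega))))
        (measure_lt_top _ _)⟩
  have hσ : SigmaFinite μ := Measure.sigmaFinite_of_countable (countable_range fun k : ℕ => Fi (-k))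
    (forall_mem_range.2 fun k => (hμF (-k)).2) (by rw [sUnion_range, hcover])
  refine ⟨μ, ⟨hσ, hμF⟩, funext fun i => ?_⟩
  set k := (-i).toNat
  calc etaMap Fi μ i = μ[|Fi (-k)][|Fi i] :=
        (cond_cond_of_subset (hmeas _) (hmeas i) (hanti (hle i)) (hμF _).2.ne).symm
    _ = (ν (-k))[|Fi (-k)][|Fi i] := by
        rw [← cond_restrict_self (μ := μ), hμ k, hm,
          cond_smul_measure (ENNReal.inv_ne_zero.2 (measure_ne_top _ _))
            (ENNReal.inv_ne_top.2 (hne0 (by omega)))]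
    _ = ν i := by
        rw [← eq_cond_of_mem_HSeq hmeas hdec hν le_rfl, ← eq_cond_of_mem_HSeq hmeas hdec hν (hle i)]

end Sequences

/-- `η` is a well-defined bijection from `𝓗((F_i))` modulo scale equivalence onto
`H((F_i))`: it maps `𝓗` into `H`, two measures have the same image iff they are
positive scalar multiples of each other, and every element of `H` is an image. -/
theorem etaMap_bijective (Fi : ℤ → Set F) (hmeas : ∀ i, MeasurableSet (Fi i))
    (hdec : ∀ i : ℤ, Fi (i + 1) ⊆ Fi i) (hcover : ⋃ k : ℕ, Fi (-(k : ℤ)) = Set.univ) :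
    (∀ μ ∈ HClass Fi, etaMap Fi μ ∈ HSeq Fi) ∧
    (∀ μ ∈ HClass Fi, ∀ μ' ∈ HClass Fi,
      (etaMap Fi μ = etaMap Fi μ' ↔ ∃ c : NNReal, 0 < c ∧ μ' = (c : ENNReal) • μ)) ∧
    (∀ ν ∈ HSeq Fi, ∃ μ ∈ HClass Fi, etaMap Fi μ = ν) := by
  refine ⟨fun μ hμ => etaMap_mem_HSeq hmeas hdec hμ.2, fun μ hμ μ' hμ' => ⟨?_, ?_⟩,
    fun ν hν => exists_mem_HClass_etaMap_eq hmeas hdec hcover hν⟩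
  · exact exists_eq_smul_of_etaMap_eq hmeas hdec hcover hμ.2 hμ'.2
  · rintro ⟨c, hc, rfl⟩
    exact (etaMap_smul (ENNReal.coe_ne_zero.2 hc.ne') ENNReal.coe_ne_top).symm
end

section
/- Let $\Sigma$ be a finite alphabet and $\mathcal{M} \subset \mathcal{M}(\Sigma)$ a transition complete set of probability measures on $\Sigma^{\mathbb{N}}$ satisfying $\mathcal{M} = \overline{\bigcup_{\alpha\in\Sigma}\tau(\alpha)\mathcal{M}}$. Then for every $I \in \mathbb{N}$, $\mathcal{M} = \overline{\bigcup_{a} \tau(a)\mathcal{M}}$, where the union runs over all admissible words $a$ of length $I$ of the presented subshift $X^{(\mathcal{M})}$. -/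
open MeasureTheory ProbabilityTheory Set

variable {A : Type*} [Fintype A] [TopologicalSpace A] [DiscreteTopology A]
  [MeasurableSpace A] [BorelSpace A]

/-- The cylinder set of sequences beginning with the word `a`. -/
def cyl {A : Type*} (a : List A) : Set (ℕ → A) := {v | ∀ j : Fin a.length, v j = a.get j}

/-- The transition `τ(a)` on measures: condition on the cylinder `C(a)` and shift by
`|a|`, so that `τ(a)μ(C(b)) = μ(C(ab))/μ(C(a))`. -/
noncomputable def tauWord {A : Type*} [MeasurableSpace A] (a : List A)
    (μ : Measure (ℕ → A)) : Measure (ℕ → A) :=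
  Measure.map (fun v n => v (n + a.length)) (μ[|cyl a])

/-- Transition completeness of a set of probability measures on `Σ^ℕ`. -/
def TransComplete (M : Set (ProbabilityMeasure (ℕ → A))) : Prop :=
  ∀ μ ∈ M, ∀ σ : A, ∀ ν : ProbabilityMeasure (ℕ → A),
    (ν : Measure (ℕ → A)) = tauWord [σ] (μ : Measure (ℕ → A)) → ν ∈ M

/-- Condition (I): `M = closure (⋃_α τ(α) M)`. -/
def CondI (M : Set (ProbabilityMeasure (ℕ → A))) : Prop :=
  M = closure (⋃ σ : A, {ν : ProbabilityMeasure (ℕ → A) |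
    ∃ μ ∈ M, (ν : Measure (ℕ → A)) = tauWord [σ] (μ : Measure (ℕ → A))})

/-- The language presented by `M`: words `a` with `μ(C(a)) > 0` for some `μ ∈ M`. -/
def Lang (M : Set (ProbabilityMeasure (ℕ → A))) : Set (List A) :=
  {a | ∃ μ ∈ M, (μ : Measure (ℕ → A)) (cyl a) ≠ 0}

/-! Induct on `I`. Applying `τ(b)` to condition (I) gives `τ(b)M ⊆ closure ⋃_σ τ(σb)M`, because
`τ(b)` (restriction to the clopen cylinder `C(b)`, normalization, shift) is weak-* continuous on
the open set where `μ(C(b)) > 0`. Conversely, transition completeness makes `M` invariant under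
every `τ(a)`, and (I) makes `M` closed. Admissibility of the words is automatic: `τ(a)μ` is a
probability measure only when `μ(C(a)) > 0`. -/

section Cylinders

variable {α : Type*}

lemma cyl_nil : cyl ([] : List α) = univ := by
  ext v; simp [cyl]

lemma cyl_cons (σ : α) (b : List α) :
    cyl (σ :: b) = cyl [σ] ∩ (fun v n => v (n + 1)) ⁻¹' cyl b := by
  ext v
  simp [cyl, Fin.forall_fin_succ]

lemma cyl_eq_iInter (a : List α) :
    cyl a = ⋂ j : Fin a.length, (fun v : ℕ → α => v j) ⁻¹' {a.get j} := by
  ext v; simp [cyl]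

lemma measurableSet_cyl [MeasurableSpace α] [MeasurableSingletonClass α] (a : List α) :
    MeasurableSet (cyl a) := by
  rw [cyl_eq_iInter]
  exact MeasurableSet.iInter fun j => measurable_pi_apply _ (measurableSet_singleton _)

lemma isClopen_cyl [TopologicalSpace α] [DiscreteTopology α] (a : List α) :
    IsClopen (cyl a) := by
  rw [cyl_eq_iInter]
  exact isClopen_iInter_of_finite fun j =>
    (isClopen_discrete {a.get j}).preimage (continuous_apply _)

lemma measurable_shift [MeasurableSpace α] (k : ℕ) :
    Measurable fun (v : ℕ → α) n => v (n + k) :=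
  measurable_pi_lambda _ fun n => measurable_pi_apply (n + k)

lemma continuous_shift [TopologicalSpace α] (k : ℕ) :
    Continuous fun (v : ℕ → α) n => v (n + k) :=
  continuous_pi fun n => continuous_apply (n + k)

end Cylinders

lemma ProbabilityTheory.cond_map {X Y : Type*} [MeasurableSpace X] [MeasurableSpace Y]
    (μ : Measure X) {f : X → Y} (hf : Measurable f) {s : Set Y} (hs : MeasurableSet s) :
    (μ.map f)[|s] = (μ[|f ⁻¹' s]).map f := by
  rw [cond, cond, Measure.restrict_map hf hs, Measure.map_smul, Measure.map_apply hf hs]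

section TauWord

variable {α : Type*} [MeasurableSpace α]

lemma tauWord_nil (μ : Measure (ℕ → α)) [IsProbabilityMeasure μ] : tauWord [] μ = μ := by
  simp [tauWord, cyl_nil, Measure.map_id']

lemma tauWord_cons [MeasurableSingletonClass α] (σ : α) (b : List α) (μ : Measure (ℕ → α))
    [IsFiniteMeasure μ] : tauWord (σ :: b) μ = tauWord b (tauWord [σ] μ) := by
  simp only [tauWord, List.length_singleton]
  rw [cond_map _ (measurable_shift 1) (measurableSet_cyl b),
    cond_cond_eq_cond_inter (measurableSet_cyl [σ])
      (measurable_shift 1 (measurableSet_cyl b)) μ,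
    Measure.map_map (measurable_shift b.length) (measurable_shift 1), ← cyl_cons]
  rfl

lemma tauWord_of_measure_cyl_eq_zero {a : List α} {μ : Measure (ℕ → α)} (h : μ (cyl a) = 0) :
    tauWord a μ = 0 := by
  rw [tauWord, cond_eq_zero_of_meas_eq_zero h, Measure.map_zero]

lemma isProbabilityMeasure_tauWord {a : List α} {μ : Measure (ℕ → α)} [IsFiniteMeasure μ]
    (h : μ (cyl a) ≠ 0) : IsProbabilityMeasure (tauWord a μ) :=
  have := cond_isProbabilityMeasure h
  Measure.isProbabilityMeasure_map (measurable_shift a.length).aemeasurable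

lemma measure_cyl_ne_zero_of_eq_tauWord {a : List α} {μ : Measure (ℕ → α)}
    {ν : ProbabilityMeasure (ℕ → α)} (hν : (ν : Measure (ℕ → α)) = tauWord a μ) :
    μ (cyl a) ≠ 0 := fun h =>
  IsProbabilityMeasure.ne_zero (ν : Measure (ℕ → α))
    (by rw [hν, tauWord_of_measure_cyl_eq_zero h])

end TauWord

lemma MeasureTheory.FiniteMeasure.continuous_restrict_of_isClopen {Ω : Type*}
    [TopologicalSpace Ω] [MeasurableSpace Ω] [OpensMeasurableSpace Ω] {C : Set Ω}
    (hC : IsClopen C) : Continuous fun μ : FiniteMeasure Ω => μ.restrict C := by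
  refine FiniteMeasure.continuous_iff_forall_continuous_integral.2 fun f => ?_
  have key : ∀ μ : FiniteMeasure Ω, ∫ ω, f ω ∂(μ.restrict C : Measure Ω) =
      ∫ ω, (BoundedContinuousFunction.indicator C hC * f) ω ∂μ := by
    intro μ
    rw [FiniteMeasure.restrict_measure_eq, ← integral_indicator hC.isOpen.measurableSet]
    congr 1 with ω
    by_cases hω : ω ∈ C <;> simp [hω]
  simp only [key]
  exact FiniteMeasure.continuous_integral_boundedContinuousFunction _

lemma MeasureTheory.ProbabilityMeasure.toFiniteMeasure_restrict_ne_zero_iff {Ω : Type*}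
    [MeasurableSpace Ω] (μ : ProbabilityMeasure Ω) (s : Set Ω) :
    μ.toFiniteMeasure.restrict s ≠ 0 ↔ (μ : Measure Ω) s ≠ 0 := by
  rw [FiniteMeasure.restrict_nonzero_iff, ProbabilityMeasure.coeFn_toFiniteMeasure, ne_eq,
    ProbabilityMeasure.null_iff_toMeasure_null]

lemma isOpen_setOf_measure_cyl_ne_zero {α : Type*} [MeasurableSpace α] [TopologicalSpace α]
    [DiscreteTopology α] [OpensMeasurableSpace (ℕ → α)] (a : List α) :
    IsOpen {μ : ProbabilityMeasure (ℕ → α) | (μ : Measure (ℕ → α)) (cyl a) ≠ 0} := by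
  simp_rw [← ProbabilityMeasure.toFiniteMeasure_restrict_ne_zero_iff,
    ← FiniteMeasure.mass_nonzero_iff]
  exact isOpen_ne_fun (FiniteMeasure.continuous_mass.comp
    ((FiniteMeasure.continuous_restrict_of_isClopen (isClopen_cyl a)).comp
      ProbabilityMeasure.toFiniteMeasure_continuous)) continuous_const

section TauWordProb

variable {α : Type*} [MeasurableSpace α] [Nonempty (ℕ → α)]

/-- `τ(a)` as a total map on probability measures; it agrees with `tauWord a` when
`μ(C(a)) ≠ 0`, and is junk (a normalized zero measure) otherwise. -/
noncomputable def tauWordProb (a : List α) (μ : ProbabilityMeasure (ℕ → α)) :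
    ProbabilityMeasure (ℕ → α) :=
  (μ.toFiniteMeasure.restrict (cyl a)).normalize.map (measurable_shift a.length).aemeasurable

lemma toMeasure_tauWordProb {a : List α} {μ : ProbabilityMeasure (ℕ → α)}
    (h : (μ : Measure (ℕ → α)) (cyl a) ≠ 0) :
    (tauWordProb a μ : Measure (ℕ → α)) = tauWord a μ := by
  have hμa : μ (cyl a) ≠ 0 := by rwa [ne_eq, ProbabilityMeasure.null_iff_toMeasure_null]
  rw [tauWordProb, ProbabilityMeasure.toMeasure_map, tauWord,
    FiniteMeasure.toMeasure_normalize_eq_of_nonzero _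
      ((μ.toFiniteMeasure_restrict_ne_zero_iff _).2 h), FiniteMeasure.restrict_mass,
    ProbabilityMeasure.coeFn_toFiniteMeasure, FiniteMeasure.restrict_measure_eq,
    ProbabilityTheory.cond, ← ProbabilityMeasure.ennreal_coeFn_eq_coeFn_toMeasure,
    ← ENNReal.coe_inv hμa]
  rfl

lemma continuousAt_tauWordProb [TopologicalSpace α] [DiscreteTopology α]
    [BorelSpace (ℕ → α)] {a : List α}
    {μ : ProbabilityMeasure (ℕ → α)} (h : (μ : Measure (ℕ → α)) (cyl a) ≠ 0) :
    ContinuousAt (tauWordProb a) μ := by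
  have hrestrict : ContinuousAt (fun ν : ProbabilityMeasure (ℕ → α) =>
      ν.toFiniteMeasure.restrict (cyl a)) μ :=
    ((FiniteMeasure.continuous_restrict_of_isClopen (isClopen_cyl a)).comp
      ProbabilityMeasure.toFiniteMeasure_continuous).continuousAt
  exact (ProbabilityMeasure.continuous_map (continuous_shift a.length)).continuousAt.comp
    (FiniteMeasure.tendsto_normalize_of_tendsto hrestrict
      ((μ.toFiniteMeasure_restrict_ne_zero_iff _).2 h))

end TauWordProb

section TauImage

variable {α : Type*} [MeasurableSpace α]

/-- The paper's `τ(a)S`: only the `τ(a)μ` that are probability measures, i.e. those with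
`μ(C(a)) > 0`, are kept. -/
def tauImage (a : List α) (S : Set (ProbabilityMeasure (ℕ → α))) :
    Set (ProbabilityMeasure (ℕ → α)) :=
  {ν | ∃ μ ∈ S, (ν : Measure (ℕ → α)) = tauWord a μ}

lemma tauImage_nil (S : Set (ProbabilityMeasure (ℕ → α))) : tauImage [] S = S := by
  ext ν
  constructor
  · rintro ⟨μ, hμ, hν⟩
    rwa [ProbabilityMeasure.toMeasure_injective (hν.trans (tauWord_nil _))]
  · exact fun hν => ⟨ν, hν, (tauWord_nil _).symm⟩

lemma tauImage_mono (a : List α) {S T : Set (ProbabilityMeasure (ℕ → α))} (h : S ⊆ T) :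
    tauImage a S ⊆ tauImage a T :=
  fun _ ⟨μ, hμ, hν⟩ => ⟨μ, h hμ, hν⟩

lemma tauImage_iUnion {ι : Sort*} (a : List α) (S : ι → Set (ProbabilityMeasure (ℕ → α))) :
    tauImage a (⋃ i, S i) = ⋃ i, tauImage a (S i) := by
  ext ν
  simp only [tauImage, mem_iUnion, mem_ofPred_eq]
  grind

lemma tauImage_cons [MeasurableSingletonClass α] (σ : α) (b : List α)
    (S : Set (ProbabilityMeasure (ℕ → α))) :
    tauImage (σ :: b) S = tauImage b (tauImage [σ] S) := by
  ext ν
  constructor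
  · rintro ⟨μ, hμ, hν⟩
    have hσ : (μ : Measure (ℕ → α)) (cyl [σ]) ≠ 0 := fun h =>
      measure_cyl_ne_zero_of_eq_tauWord hν
        (measure_mono_null (cyl_cons σ b ▸ inter_subset_left) h)
    have := isProbabilityMeasure_tauWord hσ
    exact ⟨⟨tauWord [σ] μ, this⟩, ⟨μ, hμ, rfl⟩, hν.trans (tauWord_cons σ b μ)⟩
  · rintro ⟨κ, ⟨μ, hμ, hκ⟩, hν⟩
    exact ⟨μ, hμ, by rw [hν, hκ, tauWord_cons σ b]⟩

lemma mem_lang_of_mem_tauImage {M : Set (ProbabilityMeasure (ℕ → α))} {a : List α}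
    {ν : ProbabilityMeasure (ℕ → α)} (h : ν ∈ tauImage a M) : a ∈ Lang M :=
  let ⟨μ, hμ, hν⟩ := h
  ⟨μ, hμ, measure_cyl_ne_zero_of_eq_tauWord hν⟩

lemma TransComplete.tauImage_subset [MeasurableSingletonClass α]
    {M : Set (ProbabilityMeasure (ℕ → α))} (hTC : TransComplete M) (a : List α) :
    tauImage a M ⊆ M := by
  induction a with
  | nil => rw [tauImage_nil]
  | cons σ b ih =>
    rw [tauImage_cons]
    refine (tauImage_mono b ?_).trans ih
    rintro ν ⟨μ, hμ, hν⟩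
    exact hTC μ hμ σ ν hν

lemma tauImage_closure_subset [TopologicalSpace α] [DiscreteTopology α] [BorelSpace (ℕ → α)]
    (a : List α) (S : Set (ProbabilityMeasure (ℕ → α))) :
    tauImage a (closure S) ⊆ closure (tauImage a S) := by
  rintro ν ⟨μ, hμ, hν⟩
  have := nonempty_of_isProbabilityMeasure (ν : Measure (ℕ → α))
  have ha := measure_cyl_ne_zero_of_eq_tauWord hν
  have hμ' : μ ∈ closure (S ∩ {ρ | (ρ : Measure (ℕ → α)) (cyl a) ≠ 0}) := by
    rw [inter_comm]
    exact (isOpen_setOf_measure_cyl_ne_zero a).inter_closure ⟨ha, hμ⟩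
  have himage : tauWordProb a '' (S ∩ {ρ | (ρ : Measure (ℕ → α)) (cyl a) ≠ 0}) ⊆
      tauImage a S := by
    rintro _ ⟨ρ, ⟨hρ, hρa⟩, rfl⟩
    exact ⟨ρ, hρ, toMeasure_tauWordProb hρa⟩
  rw [ProbabilityMeasure.toMeasure_injective (hν.trans (toMeasure_tauWordProb ha).symm)]
  exact closure_mono himage
    ((continuousAt_tauWordProb ha).continuousWithinAt.mem_closure_image hμ')

end TauImage

lemma CondI.tauImage_subset_closure {M : Set (ProbabilityMeasure (ℕ → A))} (hI : CondI M)
    (b : List A) :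
    tauImage b M ⊆ closure (⋃ σ, tauImage (σ :: b) M) :=
  calc tauImage b M = tauImage b (closure (⋃ σ, tauImage [σ] M)) := congrArg (tauImage b) hI
    _ ⊆ closure (tauImage b (⋃ σ, tauImage [σ] M)) := tauImage_closure_subset b _
    _ = closure (⋃ σ, tauImage (σ :: b) M) := by simp_rw [tauImage_iUnion, ← tauImage_cons]

lemma CondI.subset_closure_iUnion_tauImage {M : Set (ProbabilityMeasure (ℕ → A))}
    (hI : CondI M) (I : ℕ) :
    M ⊆ closure (⋃ a ∈ {a : List A | a.length = I}, tauImage a M) := by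
  induction I with
  | zero =>
    refine subset_closure.trans' fun μ hμ => mem_biUnion (x := []) rfl ?_
    rwa [tauImage_nil]
  | succ I ih =>
    refine ih.trans (closure_minimal (iUnion₂_subset fun b hb => ?_) isClosed_closure)
    refine (hI.tauImage_subset_closure b).trans (closure_mono (iUnion_subset fun σ => ?_))
    exact subset_biUnion_of_mem (u := fun a => tauImage a M) (by simpa using hb)

/-- For a transition complete `M` satisfying condition (I), for every `I ∈ ℕ` one has
`M = closure (⋃_{a admissible of length I} τ(a) M)`. -/
theorem condI_words (M : Set (ProbabilityMeasure (ℕ → A)))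
    (hTC : TransComplete M) (hI : CondI M) :
    ∀ I : ℕ, M = closure (⋃ a ∈ {a : List A | a.length = I ∧ a ∈ Lang M},
      {ν : ProbabilityMeasure (ℕ → A) |
        ∃ μ ∈ M, (ν : Measure (ℕ → A)) = tauWord a (μ : Measure (ℕ → A))}) := by
  intro I
  refine Subset.antisymm ?_ ?_
  · refine (hI.subset_closure_iUnion_tauImage I).trans (closure_mono ?_)
    exact iUnion₂_subset fun a ha ν hν => mem_biUnion ⟨ha, mem_lang_of_mem_tauImage hν⟩ hν
  · have hclosed : IsClosed M := by rw [hI]; exact isClosed_closure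
    exact closure_minimal (iUnion₂_subset fun a _ => hTC.tauImage_subset a) hclosed
end

section
/- Let $g$ be a residually defined $g$-function of a subshift $X \subset \Sigma^{\mathbb{Z}}$. Then $X$ has property $(D)$. -/
open Set

/-- The space of left-infinite configurations `(-∞,0]`. -/
abbrev PastSpace (A : Type*) := {i : ℤ // i ≤ 0} → A

/-- The space of configurations on `(-∞,1]`. -/
abbrev PastSpace1 (A : Type*) := {i : ℤ // i ≤ 1} → A

/-- Restriction of a bi-infinite point to `(-∞,0]`. -/
def proj0 {A : Type*} (x : ℤ → A) : PastSpace A := fun j => x j.1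

/-- Restriction of a bi-infinite point to `(-∞,1]`. -/
def proj1 {A : Type*} (x : ℤ → A) : PastSpace1 A := fun j => x j.1

/-- `Γ₁⁺(x⁻)`: symbols that can follow the past `x⁻` in `X`. -/
def Gamma1 {A : Type*} (X : Set (ℤ → A)) (y : PastSpace A) : Set A :=
  {σ | ∃ x ∈ X, proj0 x = y ∧ x 1 = σ}

/-- Concatenation `(x⁻, α) ∈ X_{(-∞,1]}` of a past and a symbol. -/
def glue {A : Type*} (y : PastSpace A) (α : A) : PastSpace1 A :=
  fun j => if h : j.1 ≤ 0 then y ⟨j.1, h⟩ else α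

/-- A residually defined `g`-function of the subshift `X`: a continuous `[0,1]`-valued
function on a residual subset `Dm` of `X_{(-∞,0]}`, summing to `1` over `Γ₁⁺(x⁻)`,
admitting no continuous extension to any further point of `X_{(-∞,0]}`, and whose
positivity set is dense in `X_{(-∞,1]}`. -/
structure ResGFun {A : Type*} [Fintype A] [TopologicalSpace A] [DiscreteTopology A]
    (X : Set (ℤ → A)) where
  Dm : Set (PastSpace A)
  g : PastSpace A → A → ℝ
  subset : Dm ⊆ proj0 '' X
  resid : (Subtype.val ⁻¹' Dm : Set ↥(proj0 '' X)) ∈ residual ↥(proj0 '' X)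
  mem_Icc : ∀ y ∈ Dm, ∀ σ : A, g y σ ∈ Set.Icc (0 : ℝ) 1
  cont : ∀ σ : A, ContinuousOn (fun y => g y σ) Dm
  sum_one : ∀ y ∈ Dm, ∑ σ : A, (Gamma1 X y).indicator (g y) σ = 1
  maximal : ∀ y ∈ (proj0 '' X) \ Dm,
    ¬ ∃ g' : PastSpace A → A → ℝ, (∀ z ∈ Dm, ∀ σ : A, g' z σ = g z σ) ∧
      ∀ σ : A, ContinuousOn (fun z => g' z σ) (insert y Dm)
  support_dense : proj1 '' X =
    closure {z : PastSpace1 A | ∃ y ∈ Dm, ∃ α ∈ Gamma1 X y, 0 < g y α ∧ z = glue y α}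

section auxGfun

set_option linter.unusedSectionVars false

variable {A : Type*} [Fintype A] [TopologicalSpace A] [DiscreteTopology A]

/-- Cylinders are open. -/
lemma ResGFun.cyl_isOpen {c : ℤ} (p : {i : ℤ // i ≤ c} → A) (N : ℕ) :
    IsOpen {q : {i : ℤ // i ≤ c} → A | ∀ i : {i : ℤ // i ≤ c}, -(N:ℤ) < i.1 → q i = p i} := by
  have hfin : ({i : {i : ℤ // i ≤ c} | -(N:ℤ) < i.1}).Finite := by
    have hsub : {i : {i : ℤ // i ≤ c} | -(N:ℤ) < i.1} ⊆ Subtype.val ⁻¹' (Set.Ioc (-(N:ℤ)) c) :=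
      fun i hi => ⟨hi, i.2⟩
    exact ((Set.finite_Ioc (-(N:ℤ)) c).preimage Subtype.val_injective.injOn).subset hsub
  have heq : {q : {i : ℤ // i ≤ c} → A | ∀ i : {i : ℤ // i ≤ c}, -(N:ℤ) < i.1 → q i = p i}
      = Set.pi {i : {i : ℤ // i ≤ c} | -(N:ℤ) < i.1} (fun i => {p i}) := by
    ext q; simp [Set.mem_pi]
  rw [heq]
  exact isOpen_set_pi hfin (fun i _ => isOpen_discrete _)

/-- Every open neighborhood contains a cylinder. -/
lemma ResGFun.cyl_basis {c : ℤ} {p : {i : ℤ // i ≤ c} → A} {U : Set ({i : ℤ // i ≤ c} → A)}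
    (hU : IsOpen U) (hp : p ∈ U) :
    ∃ N : ℕ, ∀ q, (∀ i : {i : ℤ // i ≤ c}, -(N:ℤ) < i.1 → q i = p i) → q ∈ U := by
  obtain ⟨I, u, hu, hsub⟩ := isOpen_pi_iff.mp hU p hp
  refine ⟨(I.sup fun i => i.1.natAbs) + 1, fun q hq => hsub ?_⟩
  intro i hi
  have h1 : i.1.natAbs ≤ I.sup fun i => i.1.natAbs :=
    Finset.le_sup (f := fun i => i.1.natAbs) hi
  have h2 : -(((I.sup fun i => i.1.natAbs) + 1 : ℕ) : ℤ) < i.1 := by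
    omega
  rw [hq i h2]
  exact (hu i hi).2

/-- Continuity of `proj0`. -/
lemma ResGFun.proj0_continuous : Continuous (proj0 (A := A)) :=
  continuous_pi fun j => continuous_apply j.1

/-- The set of pasts that a given symbol can follow is closed. -/
lemma ResGFun.gamma1_closed (X : Set (ℤ → A)) (hXc : IsClosed X) (τ : A) :
    IsClosed {w : PastSpace A | τ ∈ Gamma1 X w} := by
  have heq : {w : PastSpace A | τ ∈ Gamma1 X w} = proj0 '' (X ∩ {x | x 1 = τ}) := by
    ext w
    constructor
    · rintro ⟨x, hx, hpx, hx1⟩; exact ⟨x, ⟨hx, hx1⟩, hpx⟩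
    · rintro ⟨x, ⟨hx, hx1⟩, hpx⟩; exact ⟨x, hx, hpx, hx1⟩
  rw [heq]
  have hcomp : IsCompact (X ∩ {x : ℤ → A | x 1 = τ}) :=
    (hXc.inter (isClosed_singleton.preimage (continuous_apply 1))).isCompact
  exact (hcomp.image ResGFun.proj0_continuous).isClosed

/-- The key numerical contradiction. -/
lemma ResGFun.sum_contra {c ε : ℝ} {σ : A} {Γw Γy : Set A} {gw gy : A → ℝ}
    (hsw : ∑ τ : A, Γw.indicator gw τ = 1)
    (hsy : ∑ τ : A, Γy.indicator gy τ = 1)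
    (hsub : Γw ⊆ Γy) (hσw : σ ∉ Γw) (hσy : σ ∈ Γy)
    (hnn : ∀ τ, 0 ≤ gw τ)
    (hcl : ∀ τ, |gw τ - gy τ| < ε)
    (hc : gy σ = c) (hε : (Fintype.card A : ℝ) * ε ≤ c / 2) (hcpos : 0 < c) : False := by
  classical
  have hεpos : 0 < ε := lt_of_le_of_lt (abs_nonneg _) (hcl σ)
  have h1 : ∑ τ ∈ Finset.univ.erase σ, Γw.indicator gw τ = 1 := by
    rw [Finset.sum_erase _ (Set.indicator_of_notMem hσw gw)]
    exact hsw
  have h2 : ∀ τ ∈ Finset.univ.erase σ, Γw.indicator gw τ ≤ Γy.indicator gy τ + ε := by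
    intro τ _
    by_cases hτ : τ ∈ Γw
    · have hτy : τ ∈ Γy := hsub hτ
      rw [Set.indicator_of_mem hτ, Set.indicator_of_mem hτy]
      have := (abs_lt.mp (hcl τ)).2
      linarith
    · rw [Set.indicator_of_notMem hτ]
      by_cases hτy : τ ∈ Γy
      · rw [Set.indicator_of_mem hτy]
        have h1' := (abs_lt.mp (hcl τ)).2
        have := hnn τ
        linarith
      · rw [Set.indicator_of_notMem hτy]
        linarith
  have h3 : (1:ℝ) ≤ ∑ τ ∈ Finset.univ.erase σ, (Γy.indicator gy τ + ε) :=
    h1 ▸ Finset.sum_le_sum h2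
  have h4 : ∑ τ ∈ Finset.univ.erase σ, Γy.indicator gy τ = 1 - c := by
    have h := Finset.sum_erase_add Finset.univ (Γy.indicator gy) (Finset.mem_univ σ)
    rw [Set.indicator_of_mem hσy, hc, hsy] at h
    linarith
  have h5 : ∑ τ ∈ Finset.univ.erase σ, (Γy.indicator gy τ + ε)
      = (1 - c) + ((Finset.univ.erase σ).card : ℝ) * ε := by
    rw [Finset.sum_add_distrib, h4, Finset.sum_const, nsmul_eq_mul]
  have h6 : ((Finset.univ.erase σ).card : ℝ) ≤ (Fintype.card A : ℝ) := by
    have := Finset.card_le_card (Finset.erase_subset σ (Finset.univ : Finset A))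
    rw [Finset.card_univ] at this
    exact_mod_cast this
  have h7 : ((Finset.univ.erase σ).card : ℝ) * ε ≤ (Fintype.card A : ℝ) * ε :=
    mul_le_mul_of_nonneg_right h6 hεpos.le
  linarith

end auxGfun

/-- A subshift admitting a residually defined `g`-function has property (D). -/
theorem propertyD_of_resGFun {A : Type*} [Fintype A] [TopologicalSpace A]
    [DiscreteTopology A] (X : Set (ℤ → A)) (hX : IsSubshift X) (G : ResGFun X) :
    PropertyD X := by
  classical
  intro x hx m
  haveI : Nonempty A := ⟨x 0⟩
  set σ : A := x 1 with hσdef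
  set S : Set (PastSpace1 A) :=
    {z : PastSpace1 A | ∃ y ∈ G.Dm, ∃ α ∈ Gamma1 X y, 0 < G.g y α ∧ z = glue y α} with hSdef
  -- Step 1: find y⁰ ∈ Dm agreeing with x on (-m,0] with x 1 ∈ Γ₁ y⁰ and g y⁰ (x 1) > 0.
  have hx1 : proj1 x ∈ closure S := by
    rw [← G.support_dense]; exact ⟨x, hx, rfl⟩
  obtain ⟨s, hsO, hsS⟩ := mem_closure_iff.mp hx1 _ (ResGFun.cyl_isOpen (proj1 x) m)
    (fun i _ => rfl)
  obtain ⟨y0, hy0Dm, α, hαΓ, hgpos, rfl⟩ := hsS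
  have hα : α = σ := by
    have h := hsO ⟨1, le_refl 1⟩ (by
      simp only
      have : (0:ℤ) ≤ m := Int.ofNat_nonneg m
      omega)
    simpa [glue, proj1] using h
  subst hα
  have hy0x : ∀ j : ℤ, -(m : ℤ) < j → (hj : j ≤ 0) → y0 ⟨j, hj⟩ = x j := by
    intro j hj hj0
    have h := hsO ⟨j, by omega⟩ hj
    simpa [glue, proj1, hj0] using h
  set c : ℝ := G.g y0 σ with hcdef
  have hcpos : 0 < c := hgpos
  set ε : ℝ := c / (2 * Fintype.card A) with hεdef
  have hcard : 0 < (Fintype.card A : ℝ) := by exact_mod_cast Fintype.card_pos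
  have hεpos : 0 < ε := by positivity
  have hεle : (Fintype.card A : ℝ) * ε ≤ c / 2 := by
    rw [hεdef]
    rw [mul_div_assoc']
    rw [div_le_div_iff₀ (by positivity) (by norm_num)]
    ring_nf
    nlinarith
  -- Step 2: continuity window K₀.
  have hconti : ∀ τ : A, ∃ N : ℕ, ∀ w ∈ G.Dm,
      (∀ i : {i : ℤ // i ≤ 0}, -(N:ℤ) < i.1 → w i = y0 i) → |G.g w τ - G.g y0 τ| < ε := by
    intro τ
    have hcw : ContinuousWithinAt (fun y => G.g y τ) G.Dm y0 := (G.cont τ) y0 hy0Dm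
    have hball : Metric.ball (G.g y0 τ) ε ∈ nhds (G.g y0 τ) := Metric.ball_mem_nhds _ hεpos
    have hmem : (fun y => G.g y τ) ⁻¹' Metric.ball (G.g y0 τ) ε ∈ nhdsWithin y0 G.Dm :=
      hcw hball
    rw [mem_nhdsWithin] at hmem
    obtain ⟨U, hUo, hyU, hUsub⟩ := hmem
    obtain ⟨N, hN⟩ := ResGFun.cyl_basis hUo hyU
    refine ⟨N, fun w hw hagree => ?_⟩
    have := hUsub ⟨hN w hagree, hw⟩
    simpa [Metric.mem_ball, Real.dist_eq] using this
  choose N0 hN0 using hconti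
  set K0 : ℕ := Finset.univ.sup N0 with hK0def
  have hK0 : ∀ w ∈ G.Dm, (∀ i : {i : ℤ // i ≤ 0}, -(K0:ℤ) < i.1 → w i = y0 i) →
      ∀ τ : A, |G.g w τ - G.g y0 τ| < ε := by
    intro w hw hagree τ
    refine hN0 τ w hw (fun i hi => hagree i (lt_of_le_of_lt ?_ hi))
    have : N0 τ ≤ K0 := Finset.le_sup (Finset.mem_univ τ)
    omega
  -- Step 3: upper semicontinuity window K₁.
  have husc : ∀ τ : A, ∃ N : ℕ, ∀ w : PastSpace A,
      (∀ i : {i : ℤ // i ≤ 0}, -(N:ℤ) < i.1 → w i = y0 i) → τ ∈ Gamma1 X w → τ ∈ Gamma1 X y0 := by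
    intro τ
    by_cases hτ : τ ∈ Gamma1 X y0
    · exact ⟨0, fun _ _ _ => hτ⟩
    · obtain ⟨N, hN⟩ := ResGFun.cyl_basis
        (ResGFun.gamma1_closed X hX.1 τ).isOpen_compl hτ
      exact ⟨N, fun w hagree hmem => absurd hmem (hN w hagree)⟩
  choose N1 hN1 using husc
  set K1 : ℕ := Finset.univ.sup N1 with hK1def
  have hK1 : ∀ w : PastSpace A, (∀ i : {i : ℤ // i ≤ 0}, -(K1:ℤ) < i.1 → w i = y0 i) →
      ∀ τ ∈ Gamma1 X w, τ ∈ Gamma1 X y0 := by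
    intro w hagree τ hτ
    refine hN1 τ w (fun i hi => hagree i (lt_of_le_of_lt ?_ hi)) hτ
    have : N1 τ ≤ K1 := Finset.le_sup (Finset.mem_univ τ)
    omega
  -- choose k and y
  set k : ℕ := max m (max K0 K1) with hkdef
  obtain ⟨yhat, hyhatX, hyhateq⟩ := G.subset hy0Dm
  -- Baire category: Dm is dense in proj0 '' X.
  have hcompX : IsCompact (proj0 '' X) :=
    ((hX.1.isCompact).image ResGFun.proj0_continuous)
  haveI : CompactSpace ↥(proj0 '' X) := isCompact_iff_compactSpace.mp hcompX
  haveI : T2Space ↥(proj0 '' X) := inferInstance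
  haveI : LocallyCompactSpace ↥(proj0 '' X) := inferInstance
  haveI : RegularSpace ↥(proj0 '' X) := inferInstance
  haveI : BaireSpace ↥(proj0 '' X) := inferInstance
  have hdense : Dense (Subtype.val ⁻¹' G.Dm : Set ↥(proj0 '' X)) :=
    dense_of_mem_residual G.resid
  refine ⟨k, yhat, hyhatX, le_max_left _ _, ?_, ?_⟩
  · intro j hj hj0
    have h2 : yhat j = y0 ⟨j, hj0⟩ := congrFun hyhateq ⟨j, hj0⟩
    rw [h2]
    exact hy0x j hj hj0
  · intro z hz hzag
    -- main claim: σ ∈ Γ₁(proj0 z)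
    have hmain : σ ∈ Gamma1 X (proj0 z) := by
      by_contra hσz
      -- glue (proj0 z) σ is not in proj1 '' X
      have hglue : glue (proj0 z) σ ∉ closure S := by
        rw [← G.support_dense]
        rintro ⟨v, hv, hveq⟩
        apply hσz
        refine ⟨v, hv, ?_, ?_⟩
        · funext j
          have h := congrFun hveq ⟨j.1, by omega⟩
          simpa [proj1, proj0, glue, j.2] using h
        · have h := congrFun hveq ⟨1, le_refl 1⟩
          simpa [proj1, glue] using h
      obtain ⟨N, hN⟩ := ResGFun.cyl_basis (isOpen_compl_iff.mpr isClosed_closure) hglue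
      set M : ℕ := max N k with hMdef
      -- density: get w ∈ Dm agreeing with proj0 z on (-M, 0]
      have hzmem : proj0 z ∈ proj0 '' X := ⟨z, hz, rfl⟩
      have hopen : IsOpen ((Subtype.val : ↥(proj0 '' X) → PastSpace A) ⁻¹'
          {q : PastSpace A | ∀ i : {i : ℤ // i ≤ 0}, -(M:ℤ) < i.1 → q i = proj0 z i}) :=
        (ResGFun.cyl_isOpen (proj0 z) M).preimage continuous_subtype_val
      obtain ⟨⟨w, hwX⟩, hwC, hwD⟩ := hdense.inter_open_nonempty _ hopen
        ⟨⟨proj0 z, hzmem⟩, fun i _ => rfl⟩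
      have hwDm : w ∈ G.Dm := hwD
      have hwz : ∀ i : {i : ℤ // i ≤ 0}, -(M:ℤ) < i.1 → w i = proj0 z i := hwC
      -- w agrees with y0 on (-k,0]
      have hwy0 : ∀ i : {i : ℤ // i ≤ 0}, -(k:ℤ) < i.1 → w i = y0 i := by
        intro i hi
        have hM : (k:ℤ) ≤ M := by exact_mod_cast le_max_right N k
        rw [hwz i (by omega)]
        have h1 : z i.1 = yhat i.1 := hzag i.1 hi i.2
        have h2 : yhat i.1 = y0 i := by
          have := congrFun hyhateq i
          simpa [proj0] using this
        simpa [proj0, h1] using h2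
      -- g w σ > 0
      have hgw : ∀ τ : A, |G.g w τ - G.g y0 τ| < ε := by
        refine hK0 w hwDm (fun i hi => hwy0 i ?_)
        have : (K0:ℤ) ≤ k := by
          have := le_max_left K0 K1
          have := le_max_right m (max K0 K1)
          omega
        omega
      have hgwσ : 0 < G.g w σ := by
        have h := abs_lt.mp (hgw σ)
        have : ε < c := by
          have h2 : (1:ℝ) ≤ (Fintype.card A : ℝ) := by exact_mod_cast Fintype.card_pos
          rw [hεdef]
          rw [div_lt_iff₀ (by positivity)]
          nlinarith
        rw [← hcdef] at h
        linarith [h.1]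
      -- σ ∉ Γ₁ w
      have hσw : σ ∉ Gamma1 X w := by
        intro hmem
        have hSmem : glue w σ ∈ S := ⟨w, hwDm, σ, hmem, hgwσ, rfl⟩
        have : glue w σ ∉ closure S := by
          apply hN
          intro i hi
          by_cases hi0 : i.1 ≤ 0
          · have hNM : (N:ℤ) ≤ M := by exact_mod_cast le_max_left N k
            have hlt : -(M:ℤ) < i.1 := by omega
            have := hwz ⟨i.1, hi0⟩ hlt
            simpa [glue, hi0] using this
          · simp [glue, hi0]
        exact this (subset_closure hSmem)
      -- Γ₁ w ⊆ Γ₁ y0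
      have hΓsub : Gamma1 X w ⊆ Gamma1 X y0 := by
        intro τ hτ
        refine hK1 w (fun i hi => hwy0 i ?_) τ hτ
        have : (K1:ℤ) ≤ k := by
          have := le_max_right K0 K1
          have := le_max_right m (max K0 K1)
          omega
        omega
      -- contradiction
      exact ResGFun.sum_contra (G.sum_one w hwDm) (G.sum_one y0 hy0Dm) hΓsub hσw hαΓ
        (fun τ => (G.mem_Icc w hwDm τ).1) hgw rfl hεle hcpos
    -- produce z'
    obtain ⟨z', hz'X, hz'eq, hz'1⟩ := hmain
    refine ⟨z', hz'X, ?_, hz'1⟩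
    intro i hi
    have := congrFun hz'eq ⟨i, hi⟩
    simpa [proj0] using this
end
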